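/- arXiv:2004.12208 — 9 statements merged into one kernel-verified Lean document; each statement's English description precedes it below -/
import Mathlib

section
/- For every field k there exists a finite-dimensional k-algebra A of k-dimension 8 which is not self-injective but such that every simple left A-module is reflexive. -/
/-!
The radical of `A = A8 k` cubes to zero, so the simple modules are the two vertex simples `S₀`,
`S₁`, on which `A` acts through the coefficient of `e₀` resp. `e₁`; they are isomorphic to the
left ideals `A a` and `A b`. For a cyclic left ideal `A w`, reflexivity amounts to the
double-annihilator conditions `r(l(w)) = w A` and `l(r(w)) = A w`, which a direct computation
confirms for `w = a` and `w = b`. Self-injectivity would force `r(l(x)) = x A` for every `x`,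
but `x = a + b` has `l(x) ⊆ l(a)` while `a ∉ x A`.
-/

universe u

/-- The evaluation map `φ_M` from a left `R`-module `M` into its double `R`-dual
`M** = Hom_{Rᵒᵖ}(Hom_R(M, R), R)`. -/
def dualEval (R : Type u) [Ring R] (M : Type u) [AddCommGroup M] [Module R M] :
    M →ₗ[R] ((M →ₗ[R] R) →ₗ[Rᵐᵒᵖ] R) where
  toFun m :=
    { toFun := fun f => f m
      map_add' := fun f g => rfl
      map_smul' := fun a f => rfl }
  map_add' m m' := by ext f; simp
  map_smul' a m := by ext f; simp

theorem exists_linearMap_apply_eq {R M N : Type*} [Ring R] [AddCommGroup M] [Module R M]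
    [AddCommGroup N] [Module R N] {x : M} (hx : ∀ m : M, ∃ t : R, t • x = m) {y : N}
    (h : ∀ t : R, t • x = 0 → t • y = 0) : ∃ f : M →ₗ[R] N, f x = y := by
  let π := LinearMap.toSpanSingleton R M x
  have hπ : Function.Surjective π := hx
  have hker : LinearMap.ker π ≤ LinearMap.ker (LinearMap.toSpanSingleton R N y) := by
    intro t ht
    simp only [LinearMap.mem_ker, LinearMap.toSpanSingleton_apply, π] at ht ⊢
    exact h t ht
  refine ⟨(LinearMap.ker π).liftQ _ hker ∘ₗ (π.quotKerEquivOfSurjective hπ).symm, ?_⟩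
  have hx₁ : (π.quotKerEquivOfSurjective hπ).symm x = Submodule.Quotient.mk 1 := by
    rw [LinearEquiv.symm_apply_eq]; simp [π]
  rw [LinearMap.comp_apply, LinearEquiv.coe_coe, hx₁, Submodule.liftQ_apply,
    LinearMap.toSpanSingleton_apply, one_smul]

theorem Module.Injective.exists_eq_mul_of_forall_mul_eq_zero {R : Type u} [Ring R]
    [Module.Injective R R] {x y : R} (h : ∀ t : R, t * x = 0 → t * y = 0) :
    ∃ m : R, y = x * m := by
  let I := Submodule.span R {x}
  have hgen (m : I) : ∃ t : R, t • ⟨x, Submodule.mem_span_singleton_self x⟩ = m := by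
    obtain ⟨t, ht⟩ := Submodule.mem_span_singleton.mp m.2
    exact ⟨t, Subtype.ext ht⟩
  obtain ⟨g, hg⟩ := exists_linearMap_apply_eq hgen (y := y) fun t ht =>
    h t (congrArg Subtype.val ht)
  obtain ⟨φ, hφ⟩ := Module.Injective.out I.subtype I.injective_subtype g
  refine ⟨φ 1, ?_⟩
  rw [← smul_eq_mul, ← map_smul, smul_eq_mul, mul_one, ← hg]
  exact (hφ _).symm

-- `S ≅ R w` via `t • s₀ ↦ t * w`, so `S* ≅ r(l(w)) = w R` and `S** ≅ l(r(w)) = R w`.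
theorem dualEval_bijective_of_annihilators {R S : Type u} [Ring R] [AddCommGroup S] [Module R S]
    {s₀ : S} (hgen : ∀ x : S, ∃ t : R, t • s₀ = x) {w : R}
    (hann : ∀ t : R, t • s₀ = 0 ↔ t * w = 0)
    (hrl : ∀ v : R, (∀ t, t * w = 0 → t * v = 0) → ∃ m, v = w * m)
    (hlr : ∀ u : R, (∀ m, w * m = 0 → u * m = 0) → ∃ t, u = t * w) :
    Function.Bijective (dualEval R S) := by
  obtain ⟨f, hf⟩ := exists_linearMap_apply_eq hgen (y := w) fun t ht => (hann t).1 ht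
  have hf_smul (t : R) : f (t • s₀) = t * w := by rw [map_smul, hf, smul_eq_mul]
  have hdual (g : S →ₗ[R] R) : ∃ m : R, g = MulOpposite.op m • f := by
    obtain ⟨m, hm⟩ := hrl (g s₀) fun t ht => by
      rw [← smul_eq_mul, ← map_smul, (hann t).2 ht, map_zero]
    refine ⟨m, LinearMap.ext fun x => ?_⟩
    obtain ⟨t, rfl⟩ := hgen x
    simp [hf, hm]
  constructor
  · rw [injective_iff_map_eq_zero]
    intro x hx
    obtain ⟨t, rfl⟩ := hgen x
    exact (hann t).2 (by rw [← hf_smul]; exact LinearMap.congr_fun hx f)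
  · intro G
    obtain ⟨t, ht⟩ := hlr (G f) fun m hm => by
      have hfm : MulOpposite.op m • f = 0 := LinearMap.ext fun x => by
        obtain ⟨s, rfl⟩ := hgen x
        simp [hf, hm]
      simpa [hfm] using (G.map_smul (MulOpposite.op m) f).symm
    refine ⟨t • s₀, LinearMap.ext fun g => ?_⟩
    obtain ⟨m, rfl⟩ := hdual g
    change (MulOpposite.op m • f) (t • s₀) = G (MulOpposite.op m • f)
    simp [hf, ht, mul_assoc]

theorem dualEval_bijective_of_character {k : Type*} {A S : Type u} [Field k] [Ring A]
    [Algebra k A] [AddCommGroup S] [Module A S] [IsSimpleModule A S] (χ : A → k) {s₀ : S}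
    (hs₀ : s₀ ≠ 0) (hs : ∀ t : A, t • s₀ = algebraMap k A (χ t) • s₀) {w : A}
    (hw₀ : w ≠ 0) (hw : ∀ t : A, t * w = χ t • w)
    (hrl : ∀ v : A, (∀ t, t * w = 0 → t * v = 0) → ∃ m, v = w * m)
    (hlr : ∀ u : A, (∀ m, w * m = 0 → u * m = 0) → ∃ t, u = t * w) :
    Function.Bijective (dualEval A S) := by
  refine dualEval_bijective_of_annihilators
    ((Submodule.span_singleton_eq_top_iff A s₀).mp (IsSimpleModule.span_singleton_eq_top A hs₀))
    (fun t => ?_) hrl hlr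
  rw [hs, hw, smul_eq_zero_iff_left hw₀]
  refine ⟨fun h => by_contra fun hχ => hs₀ ?_, fun h => by rw [h, map_zero, zero_smul]⟩
  calc s₀ = algebraMap k A (χ t)⁻¹ • algebraMap k A (χ t) • s₀ := by
        rw [smul_smul, ← map_mul, inv_mul_cancel₀ hχ, map_one, one_smul]
    _ = 0 := by rw [h, smul_zero]

theorem IsSimpleModule.smul_eq_zero_of_mul_mul_eq_zero {R M : Type*} [Ring R] [AddCommGroup M]
    [Module R M] [IsSimpleModule R M] {J : Set R} (mul_mem : ∀ a ∈ J, ∀ r : R, a * r ∈ J)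
    (cube : ∀ a ∈ J, ∀ b ∈ J, ∀ c ∈ J, a * b * c = 0) {a : R} (ha : a ∈ J) (x : M) :
    a • x = 0 := by
  let T : Submodule R M :=
    { carrier := {x | ∀ a ∈ J, a • x = 0}
      add_mem' := fun hx hy a ha => by rw [smul_add, hx a ha, hy a ha, add_zero]
      zero_mem' := fun a _ => smul_zero a
      smul_mem' := fun r x hx a ha => by rw [← mul_smul]; exact hx _ (mul_mem a ha r) }
  have hT : T ≠ ⊥ := by
    have := IsSimpleModule.nontrivial R M
    obtain ⟨s, hs⟩ := exists_ne (0 : M)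
    rw [Submodule.ne_bot_iff]
    by_cases h₁ : s ∈ T
    · exact ⟨s, h₁, hs⟩
    obtain ⟨b, hb, hbs⟩ : ∃ b ∈ J, b • s ≠ 0 := by simpa [T] using h₁
    by_cases h₂ : b • s ∈ T
    · exact ⟨_, h₂, hbs⟩
    obtain ⟨c, hc, hcs⟩ : ∃ c ∈ J, c • b • s ≠ 0 := by simpa [T] using h₂
    refine ⟨c • b • s, fun a ha => ?_, hcs⟩
    rw [smul_smul, smul_smul, cube a ha c hc b hb, zero_smul]
  have hT_top : T = ⊤ := (IsSimpleOrder.eq_bot_or_eq_top T).resolve_left hT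
  exact (hT_top ▸ Submodule.mem_top : x ∈ T) a ha

/-- The path algebra of the quiver with vertices `0, 1` and arrows `a : 0 → 0`, `b : 0 → 1`,
`c, d : 1 → 0`, modulo all paths of length two except `ac` and `bd` (paths compose like
functions). The fields are the coefficients of the eight remaining paths. -/
@[ext]
structure A8 (k : Type u) : Type u where
  (e₀ e₁ a b c d ac bd : k)

namespace A8

section CommRing

variable {k : Type u} [CommRing k]

@[simps] instance : Zero (A8 k) := ⟨⟨0, 0, 0, 0, 0, 0, 0, 0⟩⟩

@[simps] instance : One (A8 k) := ⟨⟨1, 1, 0, 0, 0, 0, 0, 0⟩⟩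

@[simps] instance : Add (A8 k) :=
  ⟨fun x y => ⟨x.e₀ + y.e₀, x.e₁ + y.e₁, x.a + y.a, x.b + y.b, x.c + y.c, x.d + y.d,
    x.ac + y.ac, x.bd + y.bd⟩⟩

@[simps] instance : Neg (A8 k) :=
  ⟨fun x => ⟨-x.e₀, -x.e₁, -x.a, -x.b, -x.c, -x.d, -x.ac, -x.bd⟩⟩

@[simps] instance : Sub (A8 k) :=
  ⟨fun x y => ⟨x.e₀ - y.e₀, x.e₁ - y.e₁, x.a - y.a, x.b - y.b, x.c - y.c, x.d - y.d,
    x.ac - y.ac, x.bd - y.bd⟩⟩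

@[simps] instance : SMul k (A8 k) :=
  ⟨fun r x => ⟨r * x.e₀, r * x.e₁, r * x.a, r * x.b, r * x.c, r * x.d, r * x.ac,
    r * x.bd⟩⟩

@[simps] instance : Mul (A8 k) :=
  ⟨fun x y => ⟨x.e₀ * y.e₀, x.e₁ * y.e₁,
    x.a * y.e₀ + x.e₀ * y.a, x.b * y.e₀ + x.e₁ * y.b,
    x.c * y.e₁ + x.e₀ * y.c, x.d * y.e₁ + x.e₀ * y.d,
    x.ac * y.e₁ + x.e₀ * y.ac + x.a * y.c, x.bd * y.e₁ + x.e₁ * y.bd + x.b * y.d⟩⟩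

instance : Ring (A8 k) where
  add_assoc _ _ _ := by ext <;> simp [add_assoc]
  zero_add _ := by ext <;> simp
  add_zero _ := by ext <;> simp
  add_comm _ _ := by ext <;> simp [add_comm]
  sub_eq_add_neg _ _ := by ext <;> simp [sub_eq_add_neg]
  neg_add_cancel _ := by ext <;> simp
  nsmul := nsmulRec
  zsmul := zsmulRec
  left_distrib _ _ _ := by ext <;> simp <;> ring
  right_distrib _ _ _ := by ext <;> simp <;> ring
  zero_mul _ := by ext <;> simp
  mul_zero _ := by ext <;> simp
  mul_assoc _ _ _ := by ext <;> simp <;> ring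
  one_mul _ := by ext <;> simp
  mul_one _ := by ext <;> simp

instance : Module k (A8 k) where
  one_smul _ := by ext <;> simp
  mul_smul _ _ _ := by ext <;> simp [mul_assoc]
  smul_zero _ := by ext <;> simp
  smul_add _ _ _ := by ext <;> simp [mul_add]
  add_smul _ _ _ := by ext <;> simp [add_mul]
  zero_smul _ := by ext <;> simp

instance : Algebra k (A8 k) :=
  Algebra.ofModule (fun _ _ _ => by ext <;> simp <;> ring) (fun _ _ _ => by ext <;> simp <;> ring)

def equivFun : A8 k ≃ₗ[k] (Fin 8 → k) where
  toFun x := ![x.e₀, x.e₁, x.a, x.b, x.c, x.d, x.ac, x.bd]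
  invFun f := ⟨f 0, f 1, f 2, f 3, f 4, f 5, f 6, f 7⟩
  left_inv _ := rfl
  right_inv f := by ext i; fin_cases i <;> rfl
  map_add' _ _ := by ext i; fin_cases i <;> rfl
  map_smul' _ _ := by ext i; fin_cases i <;> rfl

instance : Module.Finite k (A8 k) := Module.Finite.equiv equivFun.symm

theorem finrank_eq_eight [Nontrivial k] : Module.finrank k (A8 k) = 8 := by
  simp [equivFun.finrank_eq]

def vertex₀ : A8 k := ⟨1, 0, 0, 0, 0, 0, 0, 0⟩
def vertex₁ : A8 k := ⟨0, 1, 0, 0, 0, 0, 0, 0⟩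

theorem vertex₀_add_vertex₁ : vertex₀ + vertex₁ = (1 : A8 k) := by
  ext <;> simp [vertex₀, vertex₁]

def arrowA : A8 k := ⟨0, 0, 1, 0, 0, 0, 0, 0⟩
def arrowB : A8 k := ⟨0, 0, 0, 1, 0, 0, 0, 0⟩
def arrowC : A8 k := ⟨0, 0, 0, 0, 1, 0, 0, 0⟩
def arrowD : A8 k := ⟨0, 0, 0, 0, 0, 1, 0, 0⟩

theorem mul_arrowA (t : A8 k) : t * arrowA = t.e₀ • arrowA := by ext <;> simp [arrowA]

theorem mul_arrowB (t : A8 k) : t * arrowB = t.e₁ • arrowB := by ext <;> simp [arrowB]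

theorem exists_arrowA_mul_eq (v : A8 k) (h : ∀ t, t * arrowA = 0 → t * v = 0) :
    ∃ m, v = arrowA * m := by
  have h₁ := h vertex₁ (by ext <;> simp [vertex₁, arrowA])
  have h₂ := h arrowA (by ext <;> simp [arrowA])
  have h₃ := h arrowB (by ext <;> simp [arrowA, arrowB])
  refine ⟨⟨v.a, 0, 0, 0, v.ac, 0, 0, 0⟩, ?_⟩
  simp_all [A8.ext_iff, vertex₁, arrowA, arrowB]

theorem exists_mul_arrowA_eq (u : A8 k) (h : ∀ m, arrowA * m = 0 → u * m = 0) :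
    ∃ t, u = t * arrowA := by
  have h₁ := h vertex₁ (by ext <;> simp [vertex₁, arrowA])
  have h₂ := h arrowA (by ext <;> simp [arrowA])
  have h₃ := h arrowD (by ext <;> simp [arrowA, arrowD])
  refine ⟨⟨u.a, 0, 0, 0, 0, 0, 0, 0⟩, ?_⟩
  simp_all [A8.ext_iff, vertex₁, arrowA, arrowD]

theorem exists_arrowB_mul_eq (v : A8 k) (h : ∀ t, t * arrowB = 0 → t * v = 0) :
    ∃ m, v = arrowB * m := by
  have h₁ := h vertex₀ (by ext <;> simp [vertex₀, arrowB])
  have h₂ := h arrowC (by ext <;> simp [arrowB, arrowC])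
  refine ⟨⟨v.b, 0, 0, 0, 0, v.bd, 0, 0⟩, ?_⟩
  simp_all [A8.ext_iff, vertex₀, arrowB, arrowC]

theorem exists_mul_arrowB_eq (u : A8 k) (h : ∀ m, arrowB * m = 0 → u * m = 0) :
    ∃ t, u = t * arrowB := by
  have h₁ := h vertex₁ (by ext <;> simp [vertex₁, arrowB])
  have h₂ := h arrowA (by ext <;> simp [arrowA, arrowB])
  have h₃ := h arrowC (by ext <;> simp [arrowB, arrowC])
  refine ⟨⟨0, u.b, 0, 0, 0, 0, 0, 0⟩, ?_⟩
  simp_all [A8.ext_iff, vertex₁, arrowA, arrowB, arrowC]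

theorem not_injective [Nontrivial k] : ¬ Module.Injective (A8 k) (A8 k) := by
  intro _
  obtain ⟨m, hm⟩ := Module.Injective.exists_eq_mul_of_forall_mul_eq_zero
    (x := arrowA + arrowB) (y := (arrowA : A8 k)) fun t ht => by
      have ht₀ : t.e₀ = 0 := by simpa [arrowA, arrowB] using congrArg A8.a ht
      rw [mul_arrowA, ht₀, zero_smul]
  have hm₁ : m.e₀ = 1 := by simpa [arrowA, arrowB] using (congrArg A8.a hm).symm
  have hm₀ : m.e₀ = 0 := by simpa [arrowA, arrowB] using (congrArg A8.b hm).symm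
  exact one_ne_zero (hm₁.symm.trans hm₀)

def radical : Set (A8 k) := {x | x.e₀ = 0 ∧ x.e₁ = 0}

theorem mul_mem_radical {x : A8 k} (hx : x ∈ radical) (r : A8 k) : x * r ∈ radical := by
  simp_all [radical]

theorem mul_mul_eq_zero_of_mem_radical {x y z : A8 k} (hx : x ∈ radical) (hy : y ∈ radical)
    (hz : z ∈ radical) : x * y * z = 0 := by
  obtain ⟨hx₀, hx₁⟩ := hx
  obtain ⟨hy₀, hy₁⟩ := hy
  obtain ⟨hz₀, hz₁⟩ := hz
  ext <;> simp [hx₀, hx₁, hy₀, hy₁, hz₀, hz₁]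

variable {S : Type*} [AddCommGroup S] [Module (A8 k) S] [IsSimpleModule (A8 k) S]

theorem smul_eq_smul_of_sub_mem_radical {s t : A8 k} (h : s - t ∈ radical) (x : S) :
    s • x = t • x := by
  rw [← sub_eq_zero, ← sub_smul]
  exact IsSimpleModule.smul_eq_zero_of_mul_mul_eq_zero (fun _ ha r => mul_mem_radical ha r)
    (fun _ ha _ hb _ hc => mul_mul_eq_zero_of_mem_radical ha hb hc) h x

theorem smul_vertex₀_smul (t : A8 k) (x : S) :
    t • (vertex₀ : A8 k) • x = algebraMap k (A8 k) t.e₀ • (vertex₀ : A8 k) • x := by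
  simp only [smul_smul]
  exact smul_eq_smul_of_sub_mem_radical
    (by simp [radical, vertex₀, Algebra.algebraMap_eq_smul_one]) x

theorem smul_vertex₁_smul (t : A8 k) (x : S) :
    t • (vertex₁ : A8 k) • x = algebraMap k (A8 k) t.e₁ • (vertex₁ : A8 k) • x := by
  simp only [smul_smul]
  exact smul_eq_smul_of_sub_mem_radical
    (by simp [radical, vertex₁, Algebra.algebraMap_eq_smul_one]) x

end CommRing

theorem dualEval_bijective {k : Type u} [Field k] (S : Type u) [AddCommGroup S] [Module (A8 k) S]
    [IsSimpleModule (A8 k) S] : Function.Bijective (dualEval (A8 k) S) := by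
  have := IsSimpleModule.nontrivial (A8 k) S
  obtain ⟨s, hs⟩ := exists_ne (0 : S)
  by_cases h₀ : (vertex₀ : A8 k) • s = 0
  · have h₁ : (vertex₁ : A8 k) • s ≠ 0 := by
      rwa [← one_smul (A8 k) s, ← vertex₀_add_vertex₁, add_smul, h₀, zero_add] at hs
    exact dualEval_bijective_of_character e₁ h₁ (smul_vertex₁_smul · s)
      (by simp [A8.ext_iff, arrowB]) mul_arrowB exists_arrowB_mul_eq exists_mul_arrowB_eq
  · exact dualEval_bijective_of_character e₀ h₀ (smul_vertex₀_smul · s)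
      (by simp [A8.ext_iff, arrowA]) mul_arrowA exists_arrowA_mul_eq exists_mul_arrowA_eq

end A8

/-- For every field `k` there exists a finite-dimensional `k`-algebra `A` of `k`-dimension 8
which is not self-injective but such that every simple left `A`-module is reflexive. -/
theorem exists_dim8_algebra_not_selfinjective_all_simples_reflexive
    (k : Type u) [Field k] :
    ∃ A : AlgCat.{u} k,
      FiniteDimensional k A ∧
      Module.finrank k A = 8 ∧
      ¬ Module.Injective A A ∧
      (∀ (S : Type u) [AddCommGroup S] [Module A S],
        IsSimpleModule A S → Function.Bijective (dualEval A S)) :=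
  ⟨AlgCat.of k (A8 k), inferInstanceAs (Module.Finite k (A8 k)), A8.finrank_eq_eight,
    A8.not_injective, fun S _ _ _ => A8.dualEval_bijective S⟩
end

section
/- For every field k and every integer n ≥ 2 there exists a finite-dimensional k-algebra A of k-dimension 2n+4, which is not isomorphic to the direct product of two nonzero algebras, which has exactly n isomorphism classes of simple left A-modules, all of which are reflexive, and which is not self-injective. -/
universe u

/-!
`CycleAlgebra k m` is `kQ/I` for the quiver `Q` on `n = m + 2` vertices with arrows `αᵢ : i → i + 1`
(indices mod `n`), a loop `ω` at `ν = n - 1` and an arrow `δ : ν → 0`, where `I` kills every path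
of length two except `ω α_ν` and `α_μ δ` (`μ = n - 2`); so it has dimension `n + n + 4`.

The kernel of the projection onto the vertex coefficients `kⁿ` cubes to zero, so it kills every
simple module, and the simple modules are the `n` one-dimensional vertex modules `Sᵢ`. The dual of
`Sᵢ` is the space of `χᵢ`-eigenvectors in `A`, a principal right ideal `gᵢ A` (`gᵢ = αᵢ`, or `ω`
at `ν`), and `Sᵢ` is reflexive because `gᵢ` satisfies the double annihilator condition
`l(r(gᵢ)) = k gᵢ`. An element commuting with all arrows has constant vertex coefficients, so `A` is
connected. Finally `(s, t) ↦ s α_μ + t ω` embeds `S_μ × S_ν` into `A`, but `(s, t) ↦ s α_μ` does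
not extend to `A`: it would be right multiplication by some `x` with `α_μ x = α_μ` and `ω x = 0`,
which force the `ν`-th vertex coefficient of `x` to be both `1` and `0`.
-/

theorem dualEval_bijective_of_linearEquiv {R M N : Type u} [Ring R] [AddCommGroup M]
    [AddCommGroup N] [Module R M] [Module R N] (e : M ≃ₗ[R] N)
    (h : Function.Bijective (dualEval R N)) : Function.Bijective (dualEval R M) := by
  let E := LinearEquiv.congrLeft R R (LinearEquiv.congrLeft R Rᵐᵒᵖ e.symm)
  have hE : ⇑(dualEval R M) = E ∘ dualEval R N ∘ e := by
    funext x
    ext f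
    simp [E, dualEval]
  rw [hE]
  exact E.bijective.comp (h.comp e.bijective)

theorem Module.Injective.exists_eq_mul {R X : Type u} [Ring R] [AddCommGroup X] [Module R X]
    [Module.Injective R R] (j g : X →ₗ[R] R) (hj : Function.Injective j) :
    ∃ m : R, ∀ x, g x = j x * m := by
  obtain ⟨h, hh⟩ := Module.Injective.out j hj g
  exact ⟨h 1, fun x => by rw [← hh, ← smul_eq_mul, ← map_smul, smul_eq_mul, mul_one]⟩

lemma isEmpty_ringEquiv_prod {A B C : Type*} [Semiring A] [Semiring B] [Semiring C]
    [Nontrivial B] [Nontrivial C]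
    (h : ∀ z : A, IsIdempotentElem z → (∀ x, z * x = x * z) → z = 0 ∨ z = 1) :
    IsEmpty (A ≃+* B × C) := by
  refine ⟨fun e => ?_⟩
  have hidem : IsIdempotentElem (e.symm (1, 0)) := by
    rw [IsIdempotentElem, ← map_mul, Prod.mk_mul_mk, mul_one, mul_zero]
  have hcen : ∀ x, e.symm (1, 0) * x = x * e.symm (1, 0) := fun x => by
    obtain ⟨⟨b, c⟩, rfl⟩ := e.symm.surjective x
    simp only [← map_mul, Prod.mk_mul_mk, one_mul, mul_one, zero_mul, mul_zero]
  rcases h _ hidem hcen with h0 | h1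
  · simpa using congrArg (Prod.fst ∘ e) h0
  · simpa using congrArg (Prod.snd ∘ e) h1

lemma exists_ne_zero_forall_smul_eq_zero {R T : Type*} [Ring R] [AddCommGroup T] [Module R T]
    [Nontrivial T] (J : Set R) (hJ : ∀ a ∈ J, ∀ b ∈ J, ∀ c ∈ J, a * b * c = 0) :
    ∃ t : T, t ≠ 0 ∧ ∀ r ∈ J, r • t = 0 := by
  by_contra! h
  obtain ⟨t, ht⟩ := exists_ne (0 : T)
  obtain ⟨a, ha, hat⟩ := h t ht
  obtain ⟨b, hb, hbt⟩ := h _ hat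
  obtain ⟨c, hc, hct⟩ := h _ hbt
  rw [smul_smul, smul_smul, hJ c hc b hb a ha, zero_smul] at hct
  exact hct rfl

section CharModule

variable {k A : Type u} [Field k] [Ring A] [Algebra k A]

/-- `k` with `A` acting through `χ`; `of χ` is the identification with `k`. -/
def CharModule (_χ : A →ₐ[k] k) : Type u := k

namespace CharModule

variable (χ : A →ₐ[k] k)

instance : AddCommGroup (CharModule χ) := inferInstanceAs (AddCommGroup k)

instance : Module A (CharModule χ) := Module.compHom k (χ : A →+* k)

def of : k ≃+ CharModule χ := AddEquiv.refl k

variable {χ}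

lemma smul_of (x : A) (c : k) : x • of χ c = of χ (χ x * c) := rfl

lemma of_symm_smul (x : A) (c : CharModule χ) :
    (of χ).symm (x • c) = χ x * (of χ).symm c := rfl

lemma algebraMap_smul_of (c c' : k) : algebraMap k A c • of χ c' = of χ (c * c') := by
  rw [smul_of, AlgHom.commutes, Algebra.algebraMap_self, RingHom.id_apply]

instance : IsSimpleModule A (CharModule χ) := by
  refine isSimpleModule_iff_toSpanSingleton_surjective.mpr ⟨(of χ).symm.nontrivial, ?_⟩
  intro s hs t
  refine ⟨algebraMap k A ((of χ).symm t * ((of χ).symm s)⁻¹), ?_⟩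
  obtain ⟨s, rfl⟩ := (of χ).surjective s
  obtain ⟨t, rfl⟩ := (of χ).surjective t
  have hs : s ≠ 0 := by simpa using hs
  rw [LinearMap.toSpanSingleton_apply, AddEquiv.symm_apply_apply, AddEquiv.symm_apply_apply,
    algebraMap_smul_of, inv_mul_cancel_right₀ hs]

lemma map_of_eq_smul {M : Type u} [AddCommGroup M] [Module A M] (f : CharModule χ →ₗ[A] M)
    (c : k) : f (of χ c) = algebraMap k A c • f (of χ 1) := by
  rw [← map_smul, algebraMap_smul_of, mul_one]

variable {T : Type u} [AddCommGroup T] [Module A T]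

def lift (s : T) (hs : ∀ x : A, x • s = algebraMap k A (χ x) • s) : CharModule χ →ₗ[A] T where
  toFun c := algebraMap k A ((of χ).symm c) • s
  map_add' _ _ := by rw [map_add, map_add, add_smul]
  map_smul' x c := by
    rw [RingHom.id_apply, of_symm_smul, mul_comm, map_mul, mul_smul, ← hs, smul_smul, smul_smul,
      Algebra.commutes]

lemma lift_apply (s : T) (hs) (c : k) : lift (χ := χ) s hs (of χ c) = algebraMap k A c • s :=
  rfl

lemma nonempty_linearEquiv_of_smul_eq [IsSimpleModule A T] {s : T} (hs0 : s ≠ 0)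
    (hs : ∀ x : A, x • s = algebraMap k A (χ x) • s) : Nonempty (T ≃ₗ[A] CharModule χ) := by
  have hne : lift s hs ≠ 0 := fun h => hs0 <| by
    rw [← one_smul A s, ← map_one (algebraMap k A), ← lift_apply s hs, h, LinearMap.zero_apply]
  exact ⟨(LinearEquiv.ofBijective _ (LinearMap.bijective_of_ne_zero hne)).symm⟩

lemma eq_of_linearEquiv {χ' : A →ₐ[k] k} (e : CharModule χ ≃ₗ[A] CharModule χ') : χ = χ' := by
  obtain ⟨v, hv⟩ := (of χ').surjective (e (of χ 1))
  have hv0 : v ≠ 0 := by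
    rintro rfl
    simpa using hv.symm
  ext x
  have h := e.map_smul x (of χ 1)
  rw [smul_of, mul_one, ← LinearEquiv.coe_coe, map_of_eq_smul, LinearEquiv.coe_coe, ← hv,
    algebraMap_smul_of, smul_of] at h
  exact mul_right_cancel₀ hv0 ((of χ').injective h)

def toDual (g : A) (hg : ∀ x : A, x * g = χ x • g) : CharModule χ →ₗ[A] A :=
  lift g fun x => by rw [smul_eq_mul, hg, Algebra.smul_def, smul_eq_mul]

lemma toDual_apply {g : A} (hg : ∀ x : A, x * g = χ x • g) (c : k) :
    toDual g hg (of χ c) = c • g := by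
  rw [toDual, lift_apply, smul_eq_mul, ← Algebra.smul_def]

lemma op_smul_toDual_apply {g : A} (hg : ∀ x : A, x * g = χ x • g) (y : A) (c : k) :
    (MulOpposite.op y • toDual g hg) (of χ c) = c • (g * y) := by
  rw [LinearMap.smul_apply, toDual_apply, op_smul_eq_mul, smul_mul_assoc]

lemma mul_apply_of_one (f : CharModule χ →ₗ[A] A) (x : A) :
    x * f (of χ 1) = χ x • f (of χ 1) := by
  rw [← smul_eq_mul, ← map_smul, smul_of, mul_one, map_of_eq_smul, smul_eq_mul, ←
    Algebra.smul_def]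

/-- Every `f` in the dual is `op y • toDual g hg`, since `f (of χ 1)` is an eigenvector and so lies
in `g A`; hence an element of the double dual is determined by its value at `toDual g hg`, which
`hann` forces into `k g`. -/
theorem dualEval_bijective {g : A} (hg : ∀ x : A, x * g = χ x • g) (hg0 : g ≠ 0)
    (hgen : ∀ v : A, (∀ x : A, x * v = χ x • v) → ∃ y, v = g * y)
    (hann : ∀ u : A, (∀ x, g * x = 0 → u * x = 0) → ∃ c : k, u = c • g) :
    Function.Bijective (dualEval A (CharModule χ)) := by
  have hdual : ∀ f : CharModule χ →ₗ[A] A, ∃ y : A, f = MulOpposite.op y • toDual g hg := by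
    intro f
    obtain ⟨y, hy⟩ := hgen _ (mul_apply_of_one f)
    refine ⟨y, LinearMap.ext fun c => ?_⟩
    obtain ⟨c, rfl⟩ := (of χ).surjective c
    rw [op_smul_toDual_apply, ← hy, map_of_eq_smul, smul_eq_mul, ← Algebra.smul_def]
  constructor
  · rw [injective_iff_map_eq_zero]
    intro c hc
    obtain ⟨c, rfl⟩ := (of χ).surjective c
    have h : toDual g hg (of χ c) = 0 := LinearMap.congr_fun hc (toDual g hg)
    rw [toDual_apply, smul_eq_zero] at h
    simpa [hg0] using h
  · intro Φ
    have hΦ : ∀ f y, Φ (MulOpposite.op y • f) = Φ f * y := fun f y => by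
      rw [map_smul, op_smul_eq_mul]
    obtain ⟨c, hc⟩ := hann (Φ (toDual g hg)) fun x hx => by
      have h : MulOpposite.op x • toDual g hg = 0 := LinearMap.ext fun c' => by
        obtain ⟨c', rfl⟩ := (of χ).surjective c'
        rw [op_smul_toDual_apply, hx, smul_zero, LinearMap.zero_apply]
      rw [← hΦ, h, map_zero]
    refine ⟨of χ c, LinearMap.ext fun f => ?_⟩
    obtain ⟨y, rfl⟩ := hdual f
    change (MulOpposite.op y • toDual g hg) (of χ c) = _
    rw [hΦ, hc, op_smul_toDual_apply, smul_mul_assoc]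

end CharModule

theorem exists_linearEquiv_charModule {ι : Type*} [Fintype ι] [DecidableEq ι]
    (π : A →ₐ[k] (ι → k)) (ε : ι → A) (hε : ∀ i, π (ε i) = Pi.single i 1)
    (hrad : ∀ a b c, π a = 0 → π b = 0 → π c = 0 → a * b * c = 0)
    (T : Type u) [AddCommGroup T] [Module A T] [IsSimpleModule A T] :
    ∃ i, Nonempty (T ≃ₗ[A] CharModule ((Pi.evalAlgHom k (fun _ => k) i).comp π)) := by
  have := IsSimpleModule.nontrivial A T
  obtain ⟨t, ht0, ht⟩ := exists_ne_zero_forall_smul_eq_zero (T := T) {r : A | π r = 0}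
    fun a ha b hb c hc => hrad a b c ha hb hc
  obtain ⟨i, hi⟩ : ∃ i, ε i • t ≠ 0 := by
    by_contra! h
    have h1 : (1 - ∑ i, ε i) • t = 0 := ht _ (by simp [hε, Finset.univ_sum_single, Pi.one_def])
    rw [sub_smul, one_smul, Finset.sum_smul, Finset.sum_eq_zero fun i _ => h i, sub_zero] at h1
    exact ht0 h1
  refine ⟨i, CharModule.nonempty_linearEquiv_of_smul_eq hi fun x => ?_⟩
  -- `x εᵢ - χᵢ(x) εᵢ` lies in the kernel of `π`, which kills `t`.
  rw [smul_smul, smul_smul, ← sub_eq_zero, ← sub_smul]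
  refine ht _ ?_
  ext j
  by_cases hj : j = i <;> simp [hε, hj]

end CharModule

/-- The element `∑ eᵢ εᵢ + ∑ aᵢ αᵢ + w ω + d δ + p ω α_ν + q α_μ δ`, where the `εᵢ` are the vertex
idempotents and paths are composed left to right (`εᵢ αᵢ = αᵢ = αᵢ εᵢ₊₁`). -/
@[ext]
structure CycleAlgebra (k : Type u) (m : ℕ) where
  e : Fin (m + 2) → k
  a : Fin (m + 2) → k
  w : k
  d : k
  p : k
  q : k

namespace CycleAlgebra

def nu (m : ℕ) : Fin (m + 2) := Fin.last (m + 1)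

def mu (m : ℕ) : Fin (m + 2) := (Fin.last m).castSucc

variable {m : ℕ}

@[simp] lemma mu_add_one : mu m + 1 = nu m := by simp [mu, nu, Fin.coeSucc_eq_succ]

@[simp] lemma nu_add_one : nu m + 1 = 0 := Fin.last_add_one _

@[simp] lemma add_one_eq_zero_iff {i : Fin (m + 2)} : i + 1 = 0 ↔ i = nu m := by
  rw [← nu_add_one, add_left_inj]

@[simp] lemma add_one_eq_nu_iff {i : Fin (m + 2)} : i + 1 = nu m ↔ i = mu m := by
  rw [← mu_add_one, add_left_inj]

@[simp] lemma nu_ne_zero : nu m ≠ 0 := by simp [nu, Fin.ext_iff]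

lemma mu_ne_nu : mu m ≠ nu m := by simp [mu, nu, Fin.ext_iff]

section CommRing

variable {k : Type u} [CommRing k]

@[simps] instance : Zero (CycleAlgebra k m) := ⟨⟨0, 0, 0, 0, 0, 0⟩⟩

@[simps] instance : Add (CycleAlgebra k m) :=
  ⟨fun x y => ⟨x.e + y.e, x.a + y.a, x.w + y.w, x.d + y.d, x.p + y.p, x.q + y.q⟩⟩

@[simps] instance : Neg (CycleAlgebra k m) := ⟨fun x => ⟨-x.e, -x.a, -x.w, -x.d, -x.p, -x.q⟩⟩

@[simps] instance : SMul k (CycleAlgebra k m) :=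
  ⟨fun c x => ⟨c • x.e, c • x.a, c * x.w, c * x.d, c * x.p, c * x.q⟩⟩

@[simps] instance : One (CycleAlgebra k m) := ⟨⟨1, 0, 0, 0, 0, 0⟩⟩

@[simps] instance : Mul (CycleAlgebra k m) :=
  ⟨fun x y => ⟨x.e * y.e, fun i => x.e i * y.a i + x.a i * y.e (i + 1),
    x.e (nu m) * y.w + x.w * y.e (nu m),
    x.e (nu m) * y.d + x.d * y.e 0,
    x.e (nu m) * y.p + x.p * y.e 0 + x.w * y.a (nu m),
    x.e (mu m) * y.q + x.q * y.e 0 + x.a (mu m) * y.d⟩⟩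

instance : Ring (CycleAlgebra k m) where
  add_assoc _ _ _ := by ext <;> simp [add_assoc]
  zero_add _ := by ext <;> simp
  add_zero _ := by ext <;> simp
  add_comm _ _ := by ext <;> simp [add_comm]
  neg_add_cancel _ := by ext <;> simp
  nsmul := nsmulRec
  zsmul := zsmulRec
  mul_assoc _ _ _ := by ext <;> simp <;> ring
  one_mul _ := by ext <;> simp
  mul_one _ := by ext <;> simp
  left_distrib _ _ _ := by ext <;> simp <;> ring
  right_distrib _ _ _ := by ext <;> simp <;> ring
  zero_mul _ := by ext <;> simp
  mul_zero _ := by ext <;> simp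

instance : Algebra k (CycleAlgebra k m) where
  algebraMap :=
    { toFun c := ⟨fun _ => c, 0, 0, 0, 0, 0⟩
      map_one' := rfl
      map_mul' _ _ := by ext <;> simp
      map_zero' := rfl
      map_add' _ _ := by ext <;> simp }
  commutes' _ _ := by ext <;> simp <;> ring
  smul_def' _ _ := by ext <;> simp

@[simps] def idem (i : Fin (m + 2)) : CycleAlgebra k m := ⟨Pi.single i 1, 0, 0, 0, 0, 0⟩

@[simps] def arrow (i : Fin (m + 2)) : CycleAlgebra k m := ⟨0, Pi.single i 1, 0, 0, 0, 0⟩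

@[simps] def loop : CycleAlgebra k m := ⟨0, 0, 1, 0, 0, 0⟩

@[simps] def chord : CycleAlgebra k m := ⟨0, 0, 0, 1, 0, 0⟩

def vertexProj : CycleAlgebra k m →ₐ[k] (Fin (m + 2) → k) where
  toFun := e
  map_one' := rfl
  map_mul' _ _ := rfl
  map_zero' := rfl
  map_add' _ _ := rfl
  commutes' _ := rfl

def vertexChar (i : Fin (m + 2)) : CycleAlgebra k m →ₐ[k] k :=
  (Pi.evalAlgHom k (fun _ => k) i).comp vertexProj

@[simp] lemma vertexChar_apply (i : Fin (m + 2)) (x : CycleAlgebra k m) :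
    vertexChar i x = x.e i := rfl

lemma mul_arrow {i : Fin (m + 2)} (hi : i ≠ nu m) (x : CycleAlgebra k m) :
    x * arrow i = vertexChar i x • arrow i := by
  ext j <;> simp [Pi.single_apply, hi.symm]
  split_ifs with h <;> simp [h]

lemma mul_loop (x : CycleAlgebra k m) : x * loop = vertexChar (nu m) x • loop := by
  ext <;> simp

lemma eq_arrow_mul_of_mul_eq_smul {i : Fin (m + 2)} (hi : i ≠ nu m) {v : CycleAlgebra k m}
    (hv : ∀ x, x * v = vertexChar i x • v) :
    v = arrow i * (v.a i • idem (i + 1) + v.q • chord) := by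
  have hE : ∀ l, v.e l = 0 := fun l => by
    simpa using congrArg (·.a (l - 1)) (hv (arrow (l - 1)))
  have hA : ∀ l, l ≠ i → v.a l = 0 := fun l hl => by
    simpa [Pi.single_apply, hl] using congrArg (·.a l) (hv (idem l))
  have hD : v.d = 0 := by simpa using congrArg (·.q) (hv (arrow (mu m)))
  have hW : v.w = 0 := by simpa [Pi.single_apply, hi] using congrArg (·.w) (hv (idem (nu m)))
  have hP : v.p = 0 := by simpa [Pi.single_apply, hi, hE] using congrArg (·.p) (hv (idem (nu m)))
  have hQ : mu m ≠ i → v.q = 0 := fun h => by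
    simpa [Pi.single_apply, Ne.symm h, hE] using congrArg (·.q) (hv (idem (mu m)))
  ext j <;> simp [hE, hD, hW, hP, Pi.single_apply]
  · by_cases h : j = i <;> simp [h, hA]
  · exact hQ

lemma eq_loop_mul_of_mul_eq_smul {v : CycleAlgebra k m}
    (hv : ∀ x, x * v = vertexChar (nu m) x • v) :
    v = loop * (v.w • idem (nu m) + v.p • arrow (nu m)) := by
  have hE : ∀ l, v.e l = 0 := fun l => by
    simpa using congrArg (·.a (l - 1)) (hv (arrow (l - 1)))
  have hA : ∀ l, v.a l = 0 := fun l => by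
    rcases eq_or_ne l (nu m) with rfl | hl
    · simpa using congrArg (·.p) (hv loop)
    · simpa [Pi.single_apply, hl] using congrArg (·.a l) (hv (idem l))
  have hD : v.d = 0 := by simpa using congrArg (·.q) (hv (arrow (mu m)))
  have hQ : v.q = 0 := by
    simpa [Pi.single_apply, mu_ne_nu, hE] using congrArg (·.q) (hv (idem (mu m)))
  ext <;> simp [hE, hA, hD, hQ, Pi.single_apply]

lemma eq_smul_arrow_of_forall_mul_eq_zero {i : Fin (m + 2)} (hi : i ≠ nu m)
    {u : CycleAlgebra k m} (hu : ∀ x, arrow i * x = 0 → u * x = 0) : u = u.a i • arrow i := by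
  have h0 : u * idem 0 = 0 := hu _ <| by
    ext <;> simp [Pi.single_apply]
    intro h₁ h₂
    exact absurd (h₂.symm.trans h₁) hi
  have hE : ∀ l, u.e l = 0 := fun l => by
    simpa using congrArg (·.a l) (hu (arrow l) (by ext <;> simp [Pi.single_apply]))
  have hA : ∀ l, l ≠ i → u.a l = 0 := fun l hl => by
    have hx : arrow i * idem (l + 1) = (0 : CycleAlgebra k m) := by
      ext <;> simp [Pi.single_apply]
      intro h₁ h₂
      exact absurd (h₁.symm.trans h₂) hl
    simpa using congrArg (·.a l) (hu _ hx)
  have hW : u.w = 0 := by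
    simpa using congrArg (·.p) (hu (arrow (nu m)) (by ext <;> simp [Pi.single_apply]))
  have hD : u.d = 0 := by simpa using congrArg (·.d) h0
  have hP : u.p = 0 := by simpa using congrArg (·.p) h0
  have hQ : u.q = 0 := by simpa using congrArg (·.q) h0
  ext j <;> simp [hE, hW, hD, hP, hQ, Pi.single_apply]
  by_cases h : j = i <;> simp [h, hA]

lemma eq_smul_loop_of_forall_mul_eq_zero {u : CycleAlgebra k m}
    (hu : ∀ x, loop * x = 0 → u * x = 0) : u = u.w • loop := by
  have hu' : ∀ x : CycleAlgebra k m, x.e (nu m) = 0 → x.a (nu m) = 0 → u * x = 0 :=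
    fun x he ha => hu x (by ext <;> simp [he, ha])
  have h0 : u * idem 0 = 0 := hu' _ (by simp) (by simp)
  have hE : ∀ l, u.e l = 0 := fun l => by
    rcases eq_or_ne l (nu m) with rfl | hl
    · simpa using congrArg (·.w) (hu' loop (by simp) (by simp))
    · simpa using congrArg (·.e l) (hu' (idem l) (by simp [hl.symm]) (by simp))
  have hA : ∀ l, u.a l = 0 := fun l => by
    rcases eq_or_ne l (mu m) with rfl | hl
    · simpa using congrArg (·.q) (hu' chord (by simp) (by simp))
    · have hν : nu m ≠ l + 1 := fun h => hl (add_one_eq_nu_iff.mp h.symm)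
      simpa using congrArg (·.a l) (hu' (idem (l + 1)) (Pi.single_eq_of_ne hν 1) (by simp))
  have hD : u.d = 0 := by simpa using congrArg (·.d) h0
  have hP : u.p = 0 := by simpa using congrArg (·.p) h0
  have hQ : u.q = 0 := by simpa using congrArg (·.q) h0
  ext <;> simp [hE, hA, hD, hP, hQ]

def equivProd : CycleAlgebra k m ≃ₗ[k] (Fin (m + 2) → k) × (Fin (m + 2) → k) × k × k × k × k where
  toFun x := (x.e, x.a, x.w, x.d, x.p, x.q)
  invFun y := ⟨y.1, y.2.1, y.2.2.1, y.2.2.2.1, y.2.2.2.2.1, y.2.2.2.2.2⟩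
  map_add' _ _ := rfl
  map_smul' _ _ := rfl
  left_inv _ := rfl
  right_inv _ := rfl

end CommRing

variable {k : Type u} [Field k]

instance : Module.Finite k (CycleAlgebra k m) := Module.Finite.equiv equivProd.symm

lemma finrank_eq : Module.finrank k (CycleAlgebra k m) = 2 * (m + 2) + 4 := by
  rw [equivProd.finrank_eq]
  simp only [Module.finrank_prod, Module.finrank_fin_fun, Module.finrank_self]
  ring

theorem dualEval_bijective (i : Fin (m + 2)) :
    Function.Bijective (dualEval (CycleAlgebra k m) (CharModule (vertexChar (k := k) i))) := by
  rcases eq_or_ne i (nu m) with rfl | hi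
  · refine CharModule.dualEval_bijective mul_loop (fun h => by simpa using congrArg (·.w) h)
      (fun _ hv => ⟨_, eq_loop_mul_of_mul_eq_smul hv⟩)
      (fun _ hu => ⟨_, eq_smul_loop_of_forall_mul_eq_zero hu⟩)
  · refine CharModule.dualEval_bijective (mul_arrow hi) (fun h => by simpa using congrArg (·.a i) h)
      (fun _ hv => ⟨_, eq_arrow_mul_of_mul_eq_smul hi hv⟩)
      (fun _ hu => ⟨_, eq_smul_arrow_of_forall_mul_eq_zero hi hu⟩)

theorem exists_linearEquiv_charModule_vertexChar (T : Type u) [AddCommGroup T]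
    [Module (CycleAlgebra k m) T] [IsSimpleModule (CycleAlgebra k m) T] :
    ∃ i : Fin (m + 2), Nonempty (T ≃ₗ[CycleAlgebra k m] CharModule (vertexChar (k := k) i)) := by
  refine exists_linearEquiv_charModule vertexProj idem (fun _ => rfl) (fun a b c ha hb hc => ?_) T
  change a.e = 0 at ha
  change b.e = 0 at hb
  change c.e = 0 at hc
  ext <;> simp [ha, hb, hc]

lemma vertexChar_injective : Function.Injective (vertexChar (k := k) (m := m)) := fun i j h => by
  simpa [Pi.single_apply] using congrArg (fun χ => χ (idem j)) h

lemma eq_zero_or_eq_one_of_isIdempotentElem {z : CycleAlgebra k m} (hz : IsIdempotentElem z)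
    (hc : ∀ x, z * x = x * z) : z = 0 ∨ z = 1 := by
  have hA : ∀ j, z.a j = 0 := fun j => by
    simpa [Pi.single_apply] using (congrArg (·.a j) (hc (idem j))).symm
  have hD : z.d = 0 := by simpa using congrArg (·.d) (hc (idem 0))
  have hP : z.p = 0 := by simpa using congrArg (·.p) (hc (idem 0))
  have hW : z.w = 0 := by simpa [hP] using congrArg (·.p) (hc (arrow (nu m)))
  have hE : ∀ j, z.e j = z.e 0 := by
    have hstep : ∀ j, z.e j = z.e (j + 1) := fun j => by
      simpa [hA] using congrArg (·.a j) (hc (arrow j))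
    refine Fin.induction rfl fun j hj => ?_
    rw [← Fin.coeSucc_eq_succ, ← hstep, hj]
  have hq : z.e 0 * z.q + z.q * z.e 0 = z.q := by
    simpa [hA, hD, hE (mu m)] using congrArg (·.q) hz.eq
  have he : IsIdempotentElem (z.e 0) := by
    simpa [IsIdempotentElem] using congrArg (·.e 0) hz.eq
  rcases IsIdempotentElem.iff_eq_zero_or_one.mp he with h0 | h1
  · left
    have hq0 : z.q = 0 := by simpa [h0] using hq.symm
    ext <;> simp [hA, hD, hP, hW, hq0, hE _, h0]
  · right
    have hq0 : z.q = 0 := by simpa [h1] using hq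
    ext <;> simp [hA, hD, hP, hW, hq0, hE _, h1]

theorem not_moduleInjective_self : ¬ Module.Injective (CycleAlgebra k m) (CycleAlgebra k m) := by
  intro
  let f := CharModule.toDual (χ := vertexChar (k := k) (mu m)) (arrow (mu m)) (mul_arrow mu_ne_nu)
  let g := CharModule.toDual (χ := vertexChar (k := k) (nu m)) loop mul_loop
  have hf : ∀ c, f (CharModule.of _ c) = c • arrow (mu m) := CharModule.toDual_apply _
  have hg : ∀ c, g (CharModule.of _ c) = c • loop := CharModule.toDual_apply _
  have hinj : Function.Injective (f.coprod g) := by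
    rw [injective_iff_map_eq_zero]
    rintro ⟨s, t⟩ h
    obtain ⟨s, rfl⟩ := (CharModule.of _).surjective s
    obtain ⟨t, rfl⟩ := (CharModule.of _).surjective t
    rw [LinearMap.coprod_apply, hf, hg] at h
    have hs : s = 0 := by simpa using congrArg (·.a (mu m)) h
    have ht : t = 0 := by simpa using congrArg (·.w) h
    simp [hs, ht]
  obtain ⟨x, hx⟩ := Module.Injective.exists_eq_mul _ (f.comp (LinearMap.fst _ _ _)) hinj
  have h1 := hx (CharModule.of _ 1, 0)
  have h2 := hx (0, CharModule.of _ 1)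
  simp only [LinearMap.coprod_apply, LinearMap.comp_apply, LinearMap.fst_apply, map_zero, hf, hg,
    one_smul, add_zero, zero_add] at h1 h2
  have hx1 : x.e (nu m) = 1 := by simpa using (congrArg (·.a (mu m)) h1).symm
  have hx0 : x.e (nu m) = 0 := by simpa using (congrArg (·.w) h2).symm
  exact one_ne_zero (hx1.symm.trans hx0)

end CycleAlgebra

open CycleAlgebra in
/-- For every field `k` and every integer `n ≥ 2` there exists a finite-dimensional
`k`-algebra `A` of `k`-dimension `2n+4`, which is not isomorphic to the direct product of
two nonzero algebras, which has exactly `n` isomorphism classes of simple left `A`-modules,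
all of which are reflexive, and which is not self-injective. -/
theorem exists_connected_algebra_n_simples_all_reflexive_not_selfinjective
    (k : Type u) [Field k] (n : ℕ) (hn : 2 ≤ n) :
    ∃ A : AlgCat.{u} k,
      FiniteDimensional k A ∧
      Module.finrank k A = 2 * n + 4 ∧
      (¬ ∃ B C : AlgCat.{u} k,
        Nontrivial B ∧ Nontrivial C ∧ Nonempty (A ≃ₐ[k] (B × C))) ∧
      (∃ S : Fin n → ModuleCat.{u} A,
        (∀ i, IsSimpleModule A (S i)) ∧
        (∀ i j, i ≠ j → IsEmpty (S i ≃ₗ[A] S j)) ∧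
        (∀ (T : Type u) [AddCommGroup T] [Module A T],
          IsSimpleModule A T → ∃ i, Nonempty (T ≃ₗ[A] S i))) ∧
      (∀ (S : Type u) [AddCommGroup S] [Module A S],
        IsSimpleModule A S → Function.Bijective (dualEval A S)) ∧
      ¬ Module.Injective A A := by
  obtain ⟨m, rfl⟩ : ∃ m, n = m + 2 := ⟨n - 2, by omega⟩
  refine ⟨AlgCat.of k (CycleAlgebra k m), inferInstanceAs (Module.Finite k (CycleAlgebra k m)),
    finrank_eq, ?_, ⟨fun i => ModuleCat.of _ (CharModule (vertexChar (k := k) i)),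
      fun i => inferInstanceAs (IsSimpleModule _ (CharModule (vertexChar (k := k) i))),
      fun i j hij => ⟨fun e => hij (vertexChar_injective (CharModule.eq_of_linearEquiv e))⟩,
      fun T _ _ _ => exists_linearEquiv_charModule_vertexChar T⟩, fun S _ _ _ => ?_,
    not_moduleInjective_self⟩
  · rintro ⟨B, C, _, _, ⟨e⟩⟩
    exact (isEmpty_ringEquiv_prod fun _ => eq_zero_or_eq_one_of_isIdempotentElem).false
      e.toRingEquiv
  · obtain ⟨i, ⟨e⟩⟩ := exists_linearEquiv_charModule_vertexChar (k := k) (m := m) S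
    exact dualEval_bijective_of_linearEquiv e (dualEval_bijective i)
end

section
/- Let A be a basic finite-dimensional algebra over a field k with simple left A-modules S(1), …, S(n) (a complete set of representatives of isomorphism classes). If the socle of the left module A is isomorphic to a submodule of S(1) ⊕ ⋯ ⊕ S(n), then A is self-injective. -/
universe u

/-- The socle of a module: the sum of all its simple submodules. -/
def socle (R : Type u) [Ring R] (M : Type u) [AddCommGroup M] [Module R M] :
    Submodule R M :=
  sSup {W : Submodule R M | IsSimpleModule R W}

/-- A finite-dimensional algebra is basic if `A / rad A` is a direct sum of pairwise
non-isomorphic simple left `A`-modules. -/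
def IsBasic (A : Type u) [Ring A] : Prop :=
  ∃ (m : ℕ) (T : Fin m → Submodule A (A ⧸ ((⊥ : Ideal A).jacobson))),
    (∀ i, IsSimpleModule A (T i)) ∧
    (∀ i j, i ≠ j → IsEmpty (T i ≃ₗ[A] T j)) ∧
    iSupIndep T ∧ iSup T = ⊤

/-!
The `k`-dual `D(A) = Hom_k(A, k)` of the right regular module is an injective left `A`-module
(Baer's criterion: `k`-linear functionals extend from an ideal to `A`). Every simple module embeds
in `D(A)` and pairwise non-isomorphic simple submodules are independent, so `S 0 ⊕ ⋯ ⊕ S (n-1)`,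
and with it `soc A`, embeds in `D(A)`. Extending this embedding along `soc A ⊆ A` gives a map
`A → D(A)`; it is injective because the socle of the artinian module `A` is essential, hence
bijective because `dim_k D(A) = dim_k A`. So `A ≅ D(A)` is injective.
-/

open Module DirectSum

section Simple

variable {R M : Type*} [Ring R] [AddCommGroup M] [Module R M]

theorem iSupIndep_of_pairwise_isEmpty_linearEquiv {ι : Type*} (V : ι → Submodule R M)
    [∀ i, IsSimpleModule R (V i)] (h : Pairwise fun i j ↦ IsEmpty (V i ≃ₗ[R] V j)) :
    iSupIndep V := by
  intro i
  rw [← (isSimpleModule_iff_isAtom.mp inferInstance).not_le_iff_disjoint]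
  intro hle
  have : ∀ m : V '' {j | j ≠ i}, IsSimpleModule R m := by
    rintro ⟨_, j, -, rfl⟩
    infer_instance
  obtain ⟨_, ⟨j, hji, rfl⟩, ⟨e⟩⟩ := (V i).linearEquiv_of_le_sSup _ (by rwa [sSup_image])
  exact (h (Ne.symm hji)).false e

theorem exists_injective_directSum_of_pairwise_isEmpty_linearEquiv {ι : Type*} [DecidableEq ι]
    {S : ι → Type*} [∀ i, AddCommGroup (S i)] [∀ i, Module R (S i)]
    [∀ i, IsSimpleModule R (S i)] (h : Pairwise fun i j ↦ IsEmpty (S i ≃ₗ[R] S j))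
    (f : ∀ i, S i →ₗ[R] M) (hf : ∀ i, Function.Injective (f i)) :
    ∃ F : (⨁ i, S i) →ₗ[R] M, Function.Injective F := by
  let e i : S i ≃ₗ[R] LinearMap.range (f i) := .ofInjective (f i) (hf i)
  have : ∀ i, IsSimpleModule R (LinearMap.range (f i)) := fun i ↦ .congr (e i).symm
  have hindep : iSupIndep fun i ↦ LinearMap.range (f i) :=
    iSupIndep_of_pairwise_isEmpty_linearEquiv _ fun i j hij ↦
      ⟨fun g ↦ (h hij).false ((e i).trans (g.trans (e j).symm))⟩
  exact ⟨DFinsupp.lsum ℕ (fun i ↦ (LinearMap.range (f i)).subtype) ∘ₗ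
      (DFinsupp.mapRange.linearEquiv e).toLinearMap,
    hindep.dfinsupp_lsum_injective.comp (LinearEquiv.injective _)⟩

end Simple

theorem injective_of_injective_comp_socle_subtype {R M N : Type u} [Ring R] [AddCommGroup M]
    [Module R M] [IsArtinian R M] [AddCommGroup N] [Module R N] (f : M →ₗ[R] N)
    (hf : Function.Injective (f ∘ₗ (socle R M).subtype)) : Function.Injective f := by
  have : IsAtomic (Submodule R M) := isAtomic_of_orderBot_wellFounded_lt wellFounded_lt
  rw [← LinearMap.ker_eq_bot]
  by_contra hne
  obtain ⟨T, hT, hTker⟩ := (eq_bot_or_exists_atom_le (LinearMap.ker f)).resolve_left hne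
  have hTsoc : T ≤ socle R M := le_sSup (isSimpleModule_iff_isAtom.mpr hT)
  obtain ⟨x, hxT, hx0⟩ := Submodule.exists_mem_ne_zero_of_ne_bot hT.1
  have : (⟨x, hTsoc hxT⟩ : socle R M) = 0 := hf (by simpa using hTker hxT)
  exact hx0 congr($this.1)

/-- A type synonym, so that the left `A`-action `(a • f) x = f (x * a)` does not meet the
instances on `A →ₗ[k] k`. -/
def RegularDual (k A : Type u) [Field k] [Ring A] [Algebra k A] : Type u := A →ₗ[k] k

namespace RegularDual

variable (k A : Type u) [Field k] [Ring A] [Algebra k A]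

instance : AddCommGroup (RegularDual k A) := inferInstanceAs (AddCommGroup (A →ₗ[k] k))
instance : Module k (RegularDual k A) := inferInstanceAs (Module k (A →ₗ[k] k))
instance : FunLike (RegularDual k A) A k := inferInstanceAs (FunLike (A →ₗ[k] k) A k)
instance : LinearMapClass (RegularDual k A) k A k :=
  inferInstanceAs (LinearMapClass (A →ₗ[k] k) k A k)
instance [FiniteDimensional k A] : FiniteDimensional k (RegularDual k A) :=
  inferInstanceAs (FiniteDimensional k (Dual k A))

theorem finrank_eq [FiniteDimensional k A] : finrank k (RegularDual k A) = finrank k A :=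
  Subspace.dual_finrank_eq

variable {k A}

@[ext]
theorem ext {f g : RegularDual k A} (h : ∀ x, f x = g x) : f = g := LinearMap.ext h

@[simp]
theorem zero_apply (x : A) : (0 : RegularDual k A) x = 0 := rfl

@[simp]
theorem add_apply (f g : RegularDual k A) (x : A) : (f + g) x = f x + g x := rfl

@[simp]
theorem field_smul_apply (c : k) (f : RegularDual k A) (x : A) : (c • f) x = c * f x := rfl

instance : SMul A (RegularDual k A) := ⟨fun a f ↦ LinearMap.comp f (LinearMap.mulRight k a)⟩

@[simp]
theorem smul_apply (a : A) (f : RegularDual k A) (x : A) : (a • f) x = f (x * a) := rfl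

instance : Module A (RegularDual k A) where
  one_smul f := by ext; simp
  mul_smul a b f := by ext; simp [mul_assoc]
  smul_zero a := by ext; simp
  smul_add a f g := by ext; simp
  add_smul a b f := by ext; simp [mul_add]
  zero_smul f := by ext; simp

instance : IsScalarTower k A (RegularDual k A) :=
  ⟨fun c a f ↦ by
    ext x
    rw [smul_apply, mul_smul_comm, map_smul, field_smul_apply, smul_apply, smul_eq_mul]⟩

def lift {M : Type*} [AddCommGroup M] [Module A M] [Module k M] [IsScalarTower k A M]
    (φ : M →ₗ[k] k) : M →ₗ[A] RegularDual k A where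
  toFun m := φ ∘ₗ (LinearMap.toSpanSingleton A M m).restrictScalars k
  map_add' m m' := by
    ext a
    show φ (a • (m + m')) = φ (a • m) + φ (a • m')
    rw [smul_add, map_add]
  map_smul' b m := by
    ext a
    show φ (a • b • m) = φ ((a * b) • m)
    rw [mul_smul]

@[simp]
theorem lift_apply {M : Type*} [AddCommGroup M] [Module A M] [Module k M] [IsScalarTower k A M]
    (φ : M →ₗ[k] k) (m : M) (a : A) : lift φ m a = φ (a • m) := rfl

theorem baer : Baer A (RegularDual k A) := by
  intro I g
  obtain ⟨ψ, hψ⟩ := IsSemisimpleModule.extension_property (I.subtype.restrictScalars k)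
    Subtype.val_injective (LinearMap.applyₗ (R := k) (1 : A) ∘ₗ g.restrictScalars k)
  refine ⟨lift ψ, fun x hx ↦ ?_⟩
  ext y
  calc lift ψ x y = ψ (y * x) := rfl
    _ = g (y • (⟨x, hx⟩ : I)) 1 := LinearMap.congr_fun hψ (y • (⟨x, hx⟩ : I))
    _ = g ⟨x, hx⟩ y := by rw [map_smul, smul_apply, one_mul]

theorem exists_injective_of_isSimpleModule (M : Type*) [AddCommGroup M] [Module A M]
    [IsSimpleModule A M] : ∃ f : M →ₗ[A] RegularDual k A, Function.Injective f := by
  let := Module.compHom M (algebraMap k A)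
  have : IsScalarTower k A M := .of_algebraMap_smul fun _ _ ↦ rfl
  have := IsSimpleModule.nontrivial A M
  obtain ⟨m, hm⟩ := exists_ne (0 : M)
  obtain ⟨φ, hφ⟩ := Projective.exists_dual_ne_zero k hm
  refine ⟨lift φ, (lift φ).injective_or_eq_zero.resolve_right fun h ↦ hφ ?_⟩
  simpa using congr($h m 1)

theorem bijective_of_injective [FiniteDimensional k A]
    {h : A →ₗ[A] RegularDual k A} (hinj : Function.Injective h) : Function.Bijective h :=
  ⟨hinj, (LinearMap.injective_iff_surjective_of_finrank_eq_finrank (finrank_eq k A).symm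
    (f := h.restrictScalars k)).mp hinj⟩

end RegularDual

theorem injective_self_of_injective_socle_to_regularDual {k A : Type u} [Field k] [Ring A]
    [Algebra k A] [FiniteDimensional k A]
    {f : socle A A →ₗ[A] RegularDual k A} (hf : Function.Injective f) : Module.Injective A A := by
  have : IsArtinian A A := isArtinian_of_tower k inferInstance
  obtain ⟨h, rfl⟩ := RegularDual.baer.extension_property _ (socle A A).injective_subtype f
  let e := LinearEquiv.ofBijective h
    (RegularDual.bijective_of_injective (injective_of_injective_comp_socle_subtype h hf))
  exact (RegularDual.baer.of_equiv e.symm).injective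

theorem selfinjective_of_socle_embeds_in_directSum_of_simples_general
    (k A : Type u) [Field k] [Ring A] [Algebra k A] [FiniteDimensional k A]
    (n : ℕ) (S : Fin n → Type u) [∀ i, AddCommGroup (S i)] [∀ i, Module A (S i)]
    (hsimple : ∀ i, IsSimpleModule A (S i))
    (hpairwise : ∀ i j, i ≠ j → IsEmpty (S i ≃ₗ[A] S j))
    (hsocle : ∃ W : Submodule A (DirectSum (Fin n) S),
      Nonempty (socle A A ≃ₗ[A] W)) :
    Module.Injective A A := by
  obtain ⟨W, ⟨e⟩⟩ := hsocle
  choose f hf using fun i ↦ RegularDual.exists_injective_of_isSimpleModule (k := k) (A := A) (S i)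
  obtain ⟨F, hF⟩ :=
    exists_injective_directSum_of_pairwise_isEmpty_linearEquiv (fun i j ↦ hpairwise i j) f hf
  exact injective_self_of_injective_socle_to_regularDual
    (f := F ∘ₗ W.subtype ∘ₗ e.toLinearMap) (hF.comp (W.injective_subtype.comp e.injective))

/-- Let `A` be a basic finite-dimensional algebra over a field `k` with simple left
`A`-modules `S 0, …, S (n-1)` (a complete set of representatives of isomorphism classes).
If the socle of the left module `A` is isomorphic to a submodule of `S 0 ⊕ ⋯ ⊕ S (n-1)`,
then `A` is self-injective. -/
theorem selfinjective_of_socle_embeds_in_directSum_of_simples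
    (k A : Type u) [Field k] [Ring A] [Algebra k A] [FiniteDimensional k A]
    (hbasic : IsBasic A)
    (n : ℕ) (S : Fin n → Type u) [∀ i, AddCommGroup (S i)] [∀ i, Module A (S i)]
    (hsimple : ∀ i, IsSimpleModule A (S i))
    (hpairwise : ∀ i j, i ≠ j → IsEmpty (S i ≃ₗ[A] S j))
    (hcomplete : ∀ (T : Type u) [AddCommGroup T] [Module A T],
      IsSimpleModule A T → ∃ i, Nonempty (T ≃ₗ[A] S i))
    (hsocle : ∃ W : Submodule A (DirectSum (Fin n) S),
      Nonempty (socle A A ≃ₗ[A] W)) :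
    Module.Injective A A :=
  selfinjective_of_socle_embeds_in_directSum_of_simples_general k A n S hsimple hpairwise hsocle
end

section
/- Let A be a commutative artinian ring and S a simple A-module which is reflexive. Then the A-dual Hom_A(S, A) is a simple A-module. -/
/-!
Write `S ≅ A ⧸ m` with `m` maximal. Then `S` and `S*` are killed by `m`, i.e. they are
`A ⧸ m`-vector spaces. For a proper submodule `N` of `S*`, a nonzero `A ⧸ m`-linear functional
on `S* ⧸ N` followed by a nonzero map `A ⧸ m → A` (one exists since `S* ≠ 0`) is a nonzero
functional on `S*` vanishing on `N`; by reflexivity it is evaluation at some `s ≠ 0`. Every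
`f ∈ N` then kills `s`, so `f = 0` because a nonzero map out of a simple module is injective.
-/

universe u

open Module

variable {R M : Type*} [CommRing R] [AddCommGroup M] [Module R M]

theorem Module.Dual.nontrivial_of_injective_eval [Nontrivial M]
    (h : Function.Injective (Dual.eval R M)) : Nontrivial (Dual R M) := by
  by_contra hD
  rw [not_nontrivial_iff_subsingleton] at hD
  exact not_subsingleton M h.subsingleton

theorem Module.IsTorsionBySet.dual {s : Set R} (h : IsTorsionBySet R M s) :
    IsTorsionBySet R (Dual R M) s := fun f a => LinearMap.ext fun x => by
  rw [LinearMap.smul_apply, ← map_smul, h, map_zero, LinearMap.zero_apply]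

theorem Module.isTorsionBySet_of_linearEquiv_quotient {m : Ideal R} (e : M ≃ₗ[R] R ⧸ m) :
    IsTorsionBySet R M m := by
  simpa only [e.annihilator_eq, m.annihilator_quotient] using isTorsionBySet_annihilator R M

theorem Module.IsTorsionBySet.exists_dual_apply_ne_zero {m : Ideal R} [m.IsMaximal]
    (hM : IsTorsionBySet R M m) {g : Dual R (R ⧸ m)} (hg : g ≠ 0) {x : M} (hx : x ≠ 0) :
    ∃ φ : Dual R M, φ x ≠ 0 := by
  let : Field (R ⧸ m) := Ideal.Quotient.field m
  let := hM.module
  have : IsScalarTower R (R ⧸ m) M := hM.isScalarTower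
  obtain ⟨ψ, hψ⟩ := Projective.exists_dual_eq_one (R ⧸ m) hx
  obtain ⟨c, hc⟩ : ∃ c, g c ≠ 0 := not_forall.mp fun h => hg (LinearMap.ext h)
  exact ⟨g ∘ₗ (c • ψ).restrictScalars R, by simpa [hψ] using hc⟩

theorem Module.IsTorsionBySet.dualAnnihilator_ne_bot {m : Ideal R} [m.IsMaximal]
    (hM : IsTorsionBySet R M m) {g : Dual R (R ⧸ m)} (hg : g ≠ 0) {N : Submodule R M}
    (hN : N ≠ ⊤) : N.dualAnnihilator ≠ ⊥ := by
  obtain ⟨x, hx⟩ : ∃ x, x ∉ N := by simpa [Submodule.eq_top_iff'] using hN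
  obtain ⟨φ, hφ⟩ := (hM.quotient N).exists_dual_apply_ne_zero hg
    ((Submodule.Quotient.mk_eq_zero N).not.mpr hx)
  rw [Submodule.ne_bot_iff]
  refine ⟨φ ∘ₗ N.mkQ, (Submodule.mem_dualAnnihilator _).mpr fun y hy => ?_,
    fun h => hφ ?_⟩
  · simp [(Submodule.Quotient.mk_eq_zero N).mpr hy]
  · simpa using LinearMap.congr_fun h x

theorem IsSimpleModule.eq_bot_of_forall_mem_apply_eq_zero [IsSimpleModule R M]
    {N : Submodule R (Dual R M)} {x : M} (hx : x ≠ 0) (hN : ∀ f ∈ N, f x = 0) : N = ⊥ := by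
  refine (Submodule.eq_bot_iff N).mpr fun f hf => ?_
  refine f.injective_or_eq_zero.resolve_left fun hinj => hx (hinj ?_)
  rw [hN f hf, map_zero]

theorem isSimpleModule_dual_of_isSimpleModule_reflexive_general
    (A : Type u) [CommRing A]
    (S : Type u) [AddCommGroup S] [Module A S] (hS : IsSimpleModule A S)
    (hrefl : Function.Bijective (Module.Dual.eval A S)) :
    IsSimpleModule A (Module.Dual A S) := by
  obtain ⟨m, hm, ⟨e⟩⟩ := isSimpleModule_iff_quot_maximal.mp hS
  have := IsSimpleModule.nontrivial A S
  have := Module.Dual.nontrivial_of_injective_eval hrefl.injective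
  obtain ⟨f, hf⟩ := exists_ne (0 : Dual A S)
  have hg : f ∘ₗ e.symm.toLinearMap ≠ 0 := fun h =>
    hf (LinearMap.ext fun x => by simpa using LinearMap.congr_fun h (e x))
  refine (isSimpleModule_iff A _).mpr
    { toNontrivial := (Submodule.nontrivial_iff A).mpr ‹_›
      eq_bot_or_eq_top := fun N => or_iff_not_imp_right.mpr fun hN => ?_ }
  obtain ⟨φ, hφN, hφ⟩ := Submodule.ne_bot_iff _ |>.mp
    ((isTorsionBySet_of_linearEquiv_quotient e).dual.dualAnnihilator_ne_bot hg hN)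
  obtain ⟨x, rfl⟩ := hrefl.surjective φ
  exact IsSimpleModule.eq_bot_of_forall_mem_apply_eq_zero (by rintro rfl; simp at hφ)
    ((Submodule.mem_dualAnnihilator _).mp hφN)

/-- Let `A` be a commutative artinian ring and `S` a simple `A`-module which is reflexive
(the canonical evaluation map `S → S**` is bijective). Then the `A`-dual `Hom_A(S, A)` is
a simple `A`-module. -/
theorem isSimpleModule_dual_of_isSimpleModule_reflexive
    (A : Type u) [CommRing A] [IsArtinianRing A]
    (S : Type u) [AddCommGroup S] [Module A S] (hS : IsSimpleModule A S)
    (hrefl : Function.Bijective (Module.Dual.eval A S)) :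
    IsSimpleModule A (Module.Dual A S) :=
  isSimpleModule_dual_of_isSimpleModule_reflexive_general A S hS hrefl
end

section
/- Let A be a finite-dimensional algebra over a field k and S a simple reflexive left A-module. Then the right A-module S* = Hom_A(S, A) is torsionless, and no proper nonzero factor module of S* is torsionless; that is, every nonzero torsionless quotient of S* is equal to S* itself. -/
universe u

/-- The evaluation map `φ_N` from a right `R`-module `N` (i.e. an `Rᵐᵒᵖ`-module) into its
double `R`-dual `N** = Hom_R(Hom_{Rᵒᵖ}(N, R), R)`. -/
def dualEvalRight (R : Type u) [Ring R] (N : Type u) [AddCommGroup N] [Module Rᵐᵒᵖ N] :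
    N →ₗ[Rᵐᵒᵖ] ((N →ₗ[Rᵐᵒᵖ] R) →ₗ[R] R) where
  toFun n :=
    { toFun := fun f => f n
      map_add' := fun f g => rfl
      map_smul' := fun a f => rfl }
  map_add' n n' := by ext f; simp
  map_smul' a n := by ext f; simp

/-- Let `A` be a finite-dimensional algebra over a field `k` and `S` a simple reflexive
left `A`-module. Then the right `A`-module `S* = Hom_A(S, A)` is torsionless, and no
proper nonzero factor module of `S*` is torsionless: every nonzero torsionless quotient
`S*/W` forces `W = ⊥`. -/
theorem dual_of_simple_reflexive_torsionless_and_no_proper_torsionless_quotient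
    (k A : Type u) [Field k] [Ring A] [Algebra k A] [FiniteDimensional k A]
    (S : Type u) [AddCommGroup S] [Module A S]
    (hS : IsSimpleModule A S)
    (hrefl : Function.Bijective (dualEval A S)) :
    Function.Injective (dualEvalRight A (S →ₗ[A] A)) ∧
    ∀ W : Submodule Aᵐᵒᵖ (S →ₗ[A] A),
      Nontrivial ((S →ₗ[A] A) ⧸ W) →
      Function.Injective (dualEvalRight A ((S →ₗ[A] A) ⧸ W)) →
      W = ⊥ := by
  constructor
  · rw [injective_iff_map_eq_zero]
    intro f hf
    ext m
    have h := congrFun (congrArg DFunLike.coe hf) (dualEval A S m)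
    simpa [dualEvalRight, dualEval] using h
  · intro W hnt hinj
    obtain ⟨x, hx⟩ := exists_ne (0 : (S →ₗ[A] A) ⧸ W)
    have hx' : dualEvalRight A ((S →ₗ[A] A) ⧸ W) x ≠ 0 := fun h => hx (hinj (by simp [h]))
    have hex : ∃ φ : ((S →ₗ[A] A) ⧸ W) →ₗ[Aᵐᵒᵖ] A, φ x ≠ 0 := by
      by_contra h
      push_neg at h
      apply hx'
      ext φ
      simpa [dualEvalRight] using h φ
    obtain ⟨φ, hφ⟩ := hex
    set ψ : (S →ₗ[A] A) →ₗ[Aᵐᵒᵖ] A := φ.comp W.mkQ with hψdef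
    obtain ⟨m, hm⟩ := hrefl.2 ψ
    have hmf : ∀ f : S →ₗ[A] A, f m = ψ f := fun f =>
      congrFun (congrArg DFunLike.coe hm) f
    have hm0 : m ≠ 0 := by
      rintro rfl
      obtain ⟨f, rfl⟩ := Submodule.Quotient.mk_surjective W x
      apply hφ
      have := (hmf f).symm
      simpa [hψdef, Submodule.mkQ_apply] using this
    have hspan : Submodule.span A {m} = ⊤ := by
      rcases eq_bot_or_eq_top (Submodule.span A {m}) with h | h
      · exact absurd (Submodule.span_eq_bot.mp h m rfl) hm0
      · exact h
    rw [eq_bot_iff]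
    intro w hw
    have hwψ : ψ w = 0 := by
      simp [hψdef, Submodule.mkQ_apply, (Submodule.Quotient.mk_eq_zero _).mpr hw]
    have hwm : w m = 0 := by rw [hmf w]; exact hwψ
    have hker : Submodule.span A {m} ≤ LinearMap.ker w := by
      rw [Submodule.span_le]
      simpa [Set.singleton_subset_iff] using hwm
    rw [hspan] at hker
    have hw0 : w = 0 := by
      ext s
      simpa using hker (Submodule.mem_top : s ∈ ⊤)
    simp [hw0, Submodule.mem_bot]
end

section
/- Let A be a finite-dimensional algebra over a field k and S a simple reflexive left A-module. Then the right A-module S* = Hom_A(S, A) is a brick, i.e., every nonzero endomorphism of S* is an automorphism. -/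
universe u

/-- A module is a brick if every nonzero endomorphism of it is an automorphism. -/
def IsBrick (R : Type u) [Ring R] (M : Type u) [AddCommGroup M] [Module R M] : Prop :=
  ∀ φ : M →ₗ[R] M, φ ≠ 0 → Function.Bijective φ

/-- Let `A` be a finite-dimensional algebra over a field `k` and `S` a simple reflexive
left `A`-module. Then the right `A`-module `S* = Hom_A(S, A)` is a brick. -/
theorem dual_of_simple_reflexive_isBrick
    (k A : Type u) [Field k] [Ring A] [Algebra k A] [FiniteDimensional k A]
    (S : Type u) [AddCommGroup S] [Module A S]
    (hS : IsSimpleModule A S)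
    (hrefl : Function.Bijective (dualEval A S)) :
    IsBrick Aᵐᵒᵖ (S →ₗ[A] A) := by
  intro φ hφ
  -- the transpose of φ on the double dual
  let T : ((S →ₗ[A] A) →ₗ[Aᵐᵒᵖ] A) →ₗ[A] ((S →ₗ[A] A) →ₗ[Aᵐᵒᵖ] A) :=
    { toFun := fun g => g.comp φ
      map_add' := fun g h => by ext f; rfl
      map_smul' := fun a g => by ext f; rfl }
  let e := LinearEquiv.ofBijective (dualEval A S) hrefl
  let ψ : S →ₗ[A] S := (e.symm.toLinearMap.comp T).comp e.toLinearMap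
  have key : ∀ (f : S →ₗ[A] A) (m : S), φ f m = f (ψ m) := by
    intro f m
    have h1 : dualEval A S (ψ m) = T (dualEval A S m) := by
      show e (e.symm (T (e m))) = T (dualEval A S m)
      rw [e.apply_symm_apply]
      rfl
    have h2 := congrArg (fun (g : (S →ₗ[A] A) →ₗ[Aᵐᵒᵖ] A) => g f) h1
    simpa [dualEval, T] using h2.symm
  have hcomp : ∀ f : S →ₗ[A] A, φ f = f.comp ψ := by
    intro f; ext m; exact key f m
  rcases ψ.bijective_or_eq_zero with hb | h0
  · -- ψ bijective, so precomposition with ψ is bijective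
    let Ψ := LinearEquiv.ofBijective ψ hb
    constructor
    · intro f f' hff
      ext m
      obtain ⟨n, rfl⟩ := hb.2 m
      have := congrArg (fun (g : S →ₗ[A] A) => g n) hff
      simpa [hcomp] using this
    · intro g
      refine ⟨g.comp Ψ.symm.toLinearMap, ?_⟩
      rw [hcomp]
      ext m
      show g (Ψ.symm (Ψ m)) = g m
      rw [Ψ.symm_apply_apply]
  · -- ψ = 0 forces φ = 0, contradiction
    exfalso
    apply hφ
    ext f m
    simp [key f m, h0]
end

section
/- Let A be a finite-dimensional algebra over a field k and let S, T be non-isomorphic simple reflexive left A-modules. Then the right A-modules S* = Hom_A(S, A) and T* = Hom_A(T, A) are orthogonal bricks: each is a brick, and Hom_A(S*, T*) = 0 = Hom_A(T*, S*). -/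
universe u

/-- Any map `S* → T*` comes from precomposition with a map `T → S`, when `S` is reflexive. -/
lemma exists_transpose (A S T : Type u) [Ring A] [AddCommGroup S] [Module A S]
    [AddCommGroup T] [Module A T] (hSrefl : Function.Bijective (dualEval A S))
    (f : (S →ₗ[A] A) →ₗ[Aᵐᵒᵖ] (T →ₗ[A] A)) :
    ∃ g : T →ₗ[A] S, ∀ p : S →ₗ[A] A, f p = p ∘ₗ g := by
  let eS : S ≃ₗ[A] ((S →ₗ[A] A) →ₗ[Aᵐᵒᵖ] A) := LinearEquiv.ofBijective _ hSrefl
  let h : T →ₗ[A] ((S →ₗ[A] A) →ₗ[Aᵐᵒᵖ] A) :=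
    { toFun := fun t =>
        { toFun := fun p => f p t
          map_add' := fun p q => by simp
          map_smul' := fun a p => by simp }
      map_add' := fun t t' => by ext p; simp
      map_smul' := fun a t => by ext p; simp }
  refine ⟨eS.symm.toLinearMap ∘ₗ h, fun p => ?_⟩
  ext t
  have : eS (eS.symm (h t)) = h t := eS.apply_symm_apply _
  calc f p t = h t p := rfl
    _ = eS (eS.symm (h t)) p := by rw [this]
    _ = p (eS.symm (h t)) := rfl
    _ = p ((eS.symm.toLinearMap ∘ₗ h) t) := rfl

/-- If `S` is a simple reflexive module, then its dual is a brick. -/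
lemma isBrick_dual (A S : Type u) [Ring A] [AddCommGroup S] [Module A S]
    (hS : IsSimpleModule A S) (hSrefl : Function.Bijective (dualEval A S)) :
    IsBrick Aᵐᵒᵖ (S →ₗ[A] A) := by
  intro φ hφ
  obtain ⟨g, hg⟩ := exists_transpose A S S hSrefl φ
  have hgne : g ≠ 0 := by
    rintro rfl
    apply hφ
    ext p s
    simp [hg p]
  have hgbij : Function.Bijective g := (g.bijective_or_eq_zero).resolve_right hgne
  let eg : S ≃ₗ[A] S := LinearEquiv.ofBijective g hgbij
  rw [Function.bijective_iff_has_inverse]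
  refine ⟨fun p => p ∘ₗ eg.symm.toLinearMap, fun p => ?_, fun p => ?_⟩
  · ext s
    have : g (eg.symm s) = eg (eg.symm s) := rfl
    simp [hg, this, eg.apply_symm_apply]
  · ext s
    have : g s = eg s := rfl
    simp [hg, this, eg.symm_apply_apply]

/-- If `S`, `T` are simple with no map `T ≃ S`, and `S` is reflexive, then
`Hom(S*, T*) = 0`. -/
lemma hom_dual_eq_zero (A S T : Type u) [Ring A] [AddCommGroup S] [Module A S]
    [AddCommGroup T] [Module A T]
    (hS : IsSimpleModule A S) (hT : IsSimpleModule A T)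
    (hST : IsEmpty (T ≃ₗ[A] S))
    (hSrefl : Function.Bijective (dualEval A S))
    (f : (S →ₗ[A] A) →ₗ[Aᵐᵒᵖ] (T →ₗ[A] A)) : f = 0 := by
  obtain ⟨g, hg⟩ := exists_transpose A S T hSrefl f
  have hg0 : g = 0 := by
    rcases g.bijective_or_eq_zero with hb | h0
    · exact (hST.false (LinearEquiv.ofBijective g hb)).elim
    · exact h0
  ext p t
  simp [hg p, hg0]

/-- Let `A` be a finite-dimensional algebra over a field `k` and let `S`, `T` be
non-isomorphic simple reflexive left `A`-modules. Then the right `A`-modules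
`S* = Hom_A(S, A)` and `T* = Hom_A(T, A)` are orthogonal bricks: each is a brick, and
`Hom_A(S*, T*) = 0 = Hom_A(T*, S*)`. -/
theorem duals_of_nonisomorphic_simple_reflexives_are_orthogonal_bricks
    (k A : Type u) [Field k] [Ring A] [Algebra k A] [FiniteDimensional k A]
    (S T : Type u) [AddCommGroup S] [Module A S] [AddCommGroup T] [Module A T]
    (hS : IsSimpleModule A S) (hT : IsSimpleModule A T)
    (hST : IsEmpty (S ≃ₗ[A] T))
    (hSrefl : Function.Bijective (dualEval A S))
    (hTrefl : Function.Bijective (dualEval A T)) :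
    IsBrick Aᵐᵒᵖ (S →ₗ[A] A) ∧ IsBrick Aᵐᵒᵖ (T →ₗ[A] A) ∧
    (∀ f : (S →ₗ[A] A) →ₗ[Aᵐᵒᵖ] (T →ₗ[A] A), f = 0) ∧
    (∀ f : (T →ₗ[A] A) →ₗ[Aᵐᵒᵖ] (S →ₗ[A] A), f = 0) := by
  have hTS : IsEmpty (T ≃ₗ[A] S) := ⟨fun e => hST.false e.symm⟩
  exact ⟨isBrick_dual A S hS hSrefl, isBrick_dual A T hT hTrefl,
    fun f => hom_dual_eq_zero A S T hS hT hTS hSrefl f,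
    fun f => hom_dual_eq_zero A T S hT hS hST hTrefl f⟩
end

section
/- Let A be a finite-dimensional algebra over a field k which is Gorenstein, i.e., A has finite injective dimension as a left module over itself and finite injective dimension as a right module over itself. If every simple left A-module is torsionless, then A is self-injective. -/
/-!
Suppose `A` has injective dimension at most `n + 1`. A torsionless simple module `S` embeds into
`A`, and since `A` is projective the sequence `0 → S → A → A/S → 0` embeds `Ext^{n+1}(S, A)` into
`Ext^{n+2}(A/S, A) = 0`. Every cyclic module `A/J` has finite length because `A` is Artinian,
so dévissage gives `Ext^{n+1}(A/J, A) = 0`, and Baer's criterion, shifted along a cosyzygy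
sequence, lowers the injective dimension of `A` to `n`. Descending, `A` is injective.
-/

universe u

/-- `injDimLE R n M` says that the `R`-module `M` has injective dimension at most `n`:
for `n = 0` this means `M` is injective, and for `n + 1` it means that `M` embeds into
an injective module whose cokernel has injective dimension at most `n`. -/
def injDimLE (R : Type u) [Ring R] :
    (n : ℕ) → (M : Type u) → [AddCommGroup M] → [Module R M] → Prop
  | 0, M, _, _ => Module.Injective R M
  | n + 1, M, _, _ =>
      ∃ (I : ModuleCat.{u} R) (f : M →ₗ[R] I),
        Module.Injective R I ∧ Function.Injective f ∧
        injDimLE R n (I ⧸ LinearMap.range f)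

open CategoryTheory Abelian

universe v w

namespace CategoryTheory.ShortComplex.ShortExact

variable {C : Type*} [Category C] [Abelian C] [HasExt.{w} C] {S : ShortComplex C}

lemma subsingleton_ext_X₂ (hS : S.ShortExact) {Y : C} {n : ℕ}
    (h₁ : Subsingleton (Ext S.X₁ Y n)) (h₃ : Subsingleton (Ext S.X₃ Y n)) :
    Subsingleton (Ext S.X₂ Y n) := by
  refine subsingleton_of_forall_eq 0 fun x => ?_
  obtain ⟨x₃, rfl⟩ := Ext.contravariant_sequence_exact₂ hS Y x (Subsingleton.elim _ _)
  rw [Subsingleton.elim x₃ 0, Ext.comp_zero]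

lemma subsingleton_ext_X₁_of_projective (hS : S.ShortExact) [Projective S.X₂] {Y : C} {n : ℕ}
    [HasInjectiveDimensionLT Y (n + 2)] : Subsingleton (Ext S.X₁ Y (n + 1)) := by
  refine subsingleton_of_forall_eq 0 fun x => ?_
  obtain ⟨x₂, rfl⟩ := Ext.contravariant_sequence_exact₁ hS Y x (add_comm 1 (n + 1))
    (Ext.eq_zero_of_hasInjectiveDimensionLT _ (n + 2) le_rfl)
  rw [x₂.eq_zero_of_projective, Ext.comp_zero]

lemma subsingleton_ext_X₃_of_injective (hS : S.ShortExact) [Injective S.X₂] {X : C} {n : ℕ}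
    (h₁ : Subsingleton (Ext X S.X₁ (n + 2))) : Subsingleton (Ext X S.X₃ (n + 1)) := by
  refine subsingleton_of_forall_eq 0 fun x => ?_
  obtain ⟨x₂, rfl⟩ := Ext.covariant_sequence_exact₃ X hS x rfl (Subsingleton.elim _ _)
  rw [x₂.eq_zero_of_injective, Ext.zero_comp]

end CategoryTheory.ShortComplex.ShortExact

section ShortComplexes

variable {R : Type*} [Ring R] {M N : Type v} [AddCommGroup M] [Module R M]
  [AddCommGroup N] [Module R N]

abbrev Submodule.shortComplex (P : Submodule R M) : ShortComplex (ModuleCat.{v} R) :=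
  ModuleCat.shortComplexOfCompEqZero P.subtype P.mkQ
    (LinearMap.exact_subtype_mkQ P).linearMap_comp_eq_zero

lemma Submodule.shortExact_shortComplex (P : Submodule R M) : P.shortComplex.ShortExact :=
  ModuleCat.shortComplex_shortExact _ (LinearMap.exact_subtype_mkQ P) P.injective_subtype
    P.mkQ_surjective

abbrev LinearMap.shortComplexCoker (f : M →ₗ[R] N) : ShortComplex (ModuleCat.{v} R) :=
  ModuleCat.shortComplexOfCompEqZero f (range f).mkQ
    f.exact_map_mkQ_range.linearMap_comp_eq_zero

lemma LinearMap.shortExact_shortComplexCoker {f : M →ₗ[R] N} (hf : Function.Injective f) :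
    f.shortComplexCoker.ShortExact :=
  ModuleCat.shortComplex_shortExact _ f.exact_map_mkQ_range hf (range f).mkQ_surjective

end ShortComplexes

theorem exists_injective_of_dualEval_injective {A S : Type u} [Ring A] [AddCommGroup S]
    [Module A S] [IsSimpleModule A S] (h : Function.Injective (dualEval A S)) :
    ∃ f : S →ₗ[A] A, Function.Injective f := by
  have := IsSimpleModule.nontrivial A S
  obtain ⟨s, hs⟩ := exists_ne (0 : S)
  obtain ⟨f, hf⟩ := DFunLike.ne_iff.mp (h.ne hs)
  exact ⟨f, LinearMap.injective_of_ne_zero fun hf0 => hf (by simp [dualEval, hf0])⟩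

namespace ModuleCat

lemma subsingleton_ext_of_isFiniteLength {R : Type*} [Ring R] [Small.{v} R]
    {Y : ModuleCat.{v} R} {n : ℕ}
    (h : ∀ (S : Type v) [AddCommGroup S] [Module R S], IsSimpleModule R S →
      Subsingleton (Ext (of R S) Y n))
    {X : Type v} [AddCommGroup X] [Module R X] (hX : IsFiniteLength R X) :
    Subsingleton (Ext (of R X) Y n) := by
  induction hX with
  | of_subsingleton =>
    exact HasProjectiveDimensionLT.subsingleton _ 0 n n.zero_le Y
      (hX := (isZero_of_subsingleton _).hasProjectiveDimensionLT_zero)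
  | @of_simple_quotient X _ _ P _ _ ih =>
    exact P.shortExact_shortComplex.subsingleton_ext_X₂ ih (h _ inferInstance)

section

variable {A : Type u} [Ring A]

lemma injective_of_subsingleton_ext_one_quotient {M : ModuleCat.{u} A}
    (h : ∀ J : Ideal A, Subsingleton (Ext (of A (A ⧸ J)) M 1)) : Injective M := by
  refine (Module.injective_iff_injective_object A M).mp (Module.Baer.injective fun J g => ?_)
  obtain ⟨x, hx⟩ := Ext.contravariant_sequence_exact₁ J.shortExact_shortComplex M
    (Ext.mk₀ (ofHom g)) (add_zero 1) (Subsingleton.elim _ _)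
  obtain ⟨φ, rfl⟩ := Ext.homEquiv₀.symm.surjective x
  have hφ : ofHom J.subtype ≫ φ = ofHom g := Ext.homEquiv₀.symm.injective (by simpa using hx)
  exact ⟨φ.hom, fun a ha => congr(($hφ).hom ⟨a, ha⟩)⟩

lemma hasInjectiveDimensionLT_of_subsingleton_ext_quotient :
    ∀ (n : ℕ) {M : ModuleCat.{u} A},
      (∀ J : Ideal A, Subsingleton (Ext (of A (A ⧸ J)) M (n + 1))) →
        HasInjectiveDimensionLT M (n + 1)
  | 0, _, h => injective_iff_hasInjectiveDimensionLT_one.mp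
      (injective_of_subsingleton_ext_one_quotient h)
  | n + 1, M, h => by
    obtain ⟨I, _, f, hf⟩ := EnoughInjectives.presentation M
    have hS := LinearMap.shortExact_shortComplexCoker ((mono_iff_injective f).mp hf)
    exact hS.hasInjectiveDimensionLT_X₁ (n + 1)
      (hasInjectiveDimensionLT_of_subsingleton_ext_quotient n
        fun J => hS.subsingleton_ext_X₃_of_injective (h J)) inferInstance

lemma hasInjectiveDimensionLE_of_injDimLE :
    ∀ (n : ℕ) {M : Type u} [AddCommGroup M] [Module A M], injDimLE A n M →
      HasInjectiveDimensionLE (of A M) n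
  | 0, M, _, _, h => injective_iff_hasInjectiveDimensionLT_one.mp
      ((Module.injective_iff_injective_object A M).mp h)
  | n + 1, M, _, _, ⟨I, f, hI, hf, hC⟩ => by
    have := (Module.injective_iff_injective_object A I).mp hI
    exact (LinearMap.shortExact_shortComplexCoker hf).hasInjectiveDimensionLT_X₁ (n + 1)
      (hasInjectiveDimensionLE_of_injDimLE n hC) inferInstance

end

section

variable {A : Type u} [Ring A] [IsArtinianRing A]
  (hS : ∀ (S : Type u) [AddCommGroup S] [Module A S], IsSimpleModule A S →
    ∃ f : S →ₗ[A] A, Function.Injective f)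
include hS

lemma hasInjectiveDimensionLE_self_of_succ (n : ℕ)
    [HasInjectiveDimensionLE (of A A) (n + 1)] : HasInjectiveDimensionLE (of A A) n :=
  hasInjectiveDimensionLT_of_subsingleton_ext_quotient n fun J =>
    subsingleton_ext_of_isFiniteLength (fun S _ _ hSimple => by
      obtain ⟨f, hf⟩ := hS S hSimple
      exact (LinearMap.shortExact_shortComplexCoker hf).subsingleton_ext_X₁_of_projective)
    (((isArtinianRing_iff_isFiniteLength A).mp ‹_›).of_surjective J.mkQ_surjective)

theorem injective_self_of_hasInjectiveDimensionLE :
    ∀ n : ℕ, HasInjectiveDimensionLE (of A A) n → Injective (of A A)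
  | 0, h => injective_iff_hasInjectiveDimensionLT_one.mpr h
  | n + 1, _ => injective_self_of_hasInjectiveDimensionLE n
      (hasInjectiveDimensionLE_self_of_succ hS n)

end

end ModuleCat

theorem selfinjective_of_gorenstein_of_simples_torsionless_general
    (k A : Type u) [Field k] [Ring A] [Algebra k A] [FiniteDimensional k A]
    (hleft : ∃ n, injDimLE A n A)
    (htorsionless : ∀ (S : Type u) [AddCommGroup S] [Module A S],
      IsSimpleModule A S → Function.Injective (dualEval A S)) :
    Module.Injective A A := by
  have := IsArtinianRing.of_finite k A
  obtain ⟨n, hn⟩ := hleft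
  refine (Module.injective_iff_injective_object A A).mpr
    (ModuleCat.injective_self_of_hasInjectiveDimensionLE (fun S _ _ hS => ?_) n
      (ModuleCat.hasInjectiveDimensionLE_of_injDimLE n hn))
  exact exists_injective_of_dualEval_injective (htorsionless S hS)

/-- Let `A` be a finite-dimensional algebra over a field `k` which is Gorenstein, i.e.,
`A` has finite injective dimension as a left module over itself and finite injective
dimension as a right module over itself. If every simple left `A`-module is torsionless,
then `A` is self-injective. -/
theorem selfinjective_of_gorenstein_of_simples_torsionless
    (k A : Type u) [Field k] [Ring A] [Algebra k A] [FiniteDimensional k A]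
    (hleft : ∃ n, injDimLE A n A)
    (hright : ∃ n, injDimLE Aᵐᵒᵖ n Aᵐᵒᵖ)
    (htorsionless : ∀ (S : Type u) [AddCommGroup S] [Module A S],
      IsSimpleModule A S → Function.Injective (dualEval A S)) :
    Module.Injective A A :=
  selfinjective_of_gorenstein_of_simples_torsionless_general k A hleft htorsionless
end

section
/- Let A be a finite-dimensional local algebra over a field k (i.e., A has a unique maximal left ideal). If the simple left A-module is reflexive, then A is self-injective. -/
universe u

/-!
Let `m` be the maximal ideal of `A`. It is the Jacobson radical, hence two-sided, and it consists
of the non-units. Write `r(m) = {x | m x = 0}` and `l(m) = {z | z m = 0}`; both are right ideals,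
and `(A/m)* ≅ r(m)`. Surjectivity of `φ_{A/m}` says that every right-linear map `r(m) → A` is a
left multiplication. Choosing a simple quotient `r(m) → T ≅ A/m` of right modules and mapping `T`
into `A`, every `z ∈ l(m)` is of the form `a g` for one fixed `g ∈ r(m)`, so
`dim l(m) ≤ dim A g ≤ dim A - dim m = dim z A` for every `0 ≠ z ∈ l(m)`: the right ideal `l(m)`
is simple. A minimal right ideal inside any nonzero right ideal `K` lies in `l(m)`, so `l(m) ≤ K`.
Hence a functional `f` with `f ≠ 0` on `l(m)` makes `(a, b) ↦ f (a b)` nondegenerate, `A` is a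
Frobenius algebra, and Baer's criterion applies.
-/

open MulOpposite LinearMap Module

theorem Module.injective_self_of_injective_mul_compr₂ {k A : Type*} [Field k] [Ring A]
    [Algebra k A] [FiniteDimensional k A] (f : Module.Dual k A)
    (hf : Function.Injective ((LinearMap.mul k A).compr₂ f)) : Module.Injective A A := by
  set B := (LinearMap.mul k A).compr₂ f
  have hB : Function.Bijective B :=
    ⟨hf, (injective_iff_surjective_of_finrank_eq_finrank Subspace.dual_finrank_eq.symm).1 hf⟩
  obtain ⟨hinj, hsurj⟩ := flip_bijective_iff₁.2 hB
  refine Module.Baer.injective fun I g => ?_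
  obtain ⟨G, hG⟩ := LinearMap.exists_extend (p := I.restrictScalars k) (f ∘ₗ g.restrictScalars k)
  obtain ⟨u, hu⟩ := hsurj G
  refine ⟨toSpanSingleton A A u, fun x hx => hinj (LinearMap.ext fun a => ?_)⟩
  have hax : a * x ∈ I := I.mul_mem_left a hx
  calc f (a * (x * u)) = G (a * x) := by rw [← mul_assoc, ← hu]; rfl
    _ = f (g ⟨a * x, hax⟩) := LinearMap.congr_fun hG ⟨a * x, hax⟩
    _ = f (a * g ⟨x, hx⟩) := congrArg f (g.map_smul a ⟨x, hx⟩)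

theorem LinearMap.exists_apply_eq_of_surjective_toSpanSingleton {R T M : Type*} [Ring R]
    [AddCommGroup T] [Module R T] [AddCommGroup M] [Module R M] {t : T}
    (ht : Function.Surjective (toSpanSingleton R T t)) {z : M}
    (h : ∀ r : R, r • t = 0 → r • z = 0) : ∃ f : T →ₗ[R] M, f t = z := by
  let e := (toSpanSingleton R T t).quotKerEquivOfSurjective ht
  refine ⟨(ker _).liftQ (toSpanSingleton R M z) (fun r hr => mem_ker.2 (h r (mem_ker.1 hr))) ∘ₗ
    e.symm.toLinearMap, ?_⟩
  have het : e.symm t = Submodule.Quotient.mk 1 := e.symm_apply_eq.2 (one_smul R t).symm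
  rw [comp_apply, LinearEquiv.coe_coe, het]
  exact one_smul R z

namespace Ideal

variable {A : Type u} [Ring A]

section Annihilators

def rightAnn (I : Ideal A) : Submodule Aᵐᵒᵖ A where
  carrier := {x | ∀ c ∈ I, c * x = 0}
  add_mem' hx hy c hc := by rw [mul_add, hx c hc, hy c hc, add_zero]
  zero_mem' c _ := mul_zero c
  smul_mem' b x hx c hc := by rw [smul_eq_mul_unop, ← mul_assoc, hx c hc, zero_mul]

def leftAnn (I : Ideal A) : Submodule Aᵐᵒᵖ A where
  carrier := {x | ∀ c ∈ I, x * c = 0}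
  add_mem' hx hy c hc := by rw [add_mul, hx c hc, hy c hc, add_zero]
  zero_mem' c _ := zero_mul c
  smul_mem' b x hx c hc := by rw [smul_eq_mul_unop, mul_assoc, hx _ (I.mul_mem_left _ hc)]

def dualQuotientEquivRightAnn (I : Ideal A) : (A ⧸ I →ₗ[A] A) ≃ₗ[Aᵐᵒᵖ] I.rightAnn where
  toFun f := ⟨f (Submodule.Quotient.mk 1), fun c hc => by
    rw [← smul_eq_mul, ← map_smul, ← Submodule.Quotient.mk_smul, smul_eq_mul, mul_one,
      (Submodule.Quotient.mk_eq_zero I).2 hc, map_zero]⟩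
  map_add' f g := rfl
  map_smul' b f := rfl
  invFun x := I.liftQ (toSpanSingleton A A x) fun c hc => x.2 c hc
  left_inv f := by
    ext
    exact one_mul _
  right_inv x := Subtype.ext (one_mul _)

@[simp]
theorem dualQuotientEquivRightAnn_symm_apply (I : Ideal A) (x : I.rightAnn) (a : A) :
    I.dualQuotientEquivRightAnn.symm x (Submodule.Quotient.mk a) = a * x := rfl

variable {I : Ideal A}

theorem rightAnn_ne_bot_of_injective_dualEval (hI : I ≠ ⊤)
    (h : Function.Injective (dualEval A (A ⧸ I))) : I.rightAnn ≠ ⊥ := by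
  intro hbot
  have hone : (Submodule.Quotient.mk 1 : A ⧸ I) ≠ 0 := by
    rwa [ne_eq, Submodule.Quotient.mk_eq_zero, ← eq_top_iff_one]
  refine hone (h (LinearMap.ext fun f => ?_))
  have hf : f (Submodule.Quotient.mk 1) ∈ I.rightAnn := (I.dualQuotientEquivRightAnn f).2
  rw [hbot, Submodule.mem_bot] at hf
  simpa [dualEval] using hf

theorem exists_mul_eq_of_surjective_dualEval (h : Function.Surjective (dualEval A (A ⧸ I)))
    (ψ : I.rightAnn →ₗ[Aᵐᵒᵖ] A) : ∃ a : A, ∀ x, ψ x = a * x := by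
  obtain ⟨s, hs⟩ := h (ψ ∘ₗ I.dualQuotientEquivRightAnn.toLinearMap)
  obtain ⟨a, rfl⟩ := Submodule.Quotient.mk_surjective I s
  refine ⟨a, fun x => ?_⟩
  simpa [dualEval] using (LinearMap.congr_fun hs (I.dualQuotientEquivRightAnn.symm x)).symm

end Annihilators

section Local

variable {m : Ideal A}

theorem isTwoSided_of_forall_isMaximal_eq (hm : m.IsMaximal)
    (hu : ∀ I : Ideal A, I.IsMaximal → I = m) : m.IsTwoSided := by
  have hmax : {I : Ideal A | I.IsMaximal} = {m} := Set.ext fun I => ⟨hu I, fun h => h ▸ hm⟩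
  have hjac : Ring.jacobson A = m := by
    rw [Ring.jacobson_eq_sInf_isMaximal, hmax, sInf_singleton]
  exact hjac ▸ inferInstance

theorem isUnit_of_notMem_of_forall_isMaximal_eq (hm : m.IsMaximal)
    (hu : ∀ I : Ideal A, I.IsMaximal → I = m) {x : A} (hx : x ∉ m) : IsUnit x := by
  have := isTwoSided_of_forall_isMaximal_eq hm hu
  have hleft : ∀ x ∉ m, ∃ y, y * x = 1 := fun x hx => by
    by_cases htop : span {x} = ⊤
    · exact Submodule.mem_span_singleton.1 (htop ▸ Submodule.mem_top : (1 : A) ∈ span {x})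
    · obtain ⟨M, hM, hle⟩ := exists_le_maximal _ htop
      exact absurd (hu M hM ▸ hle (mem_span_singleton_self x)) hx
  obtain ⟨y, hyx⟩ := hleft x hx
  obtain ⟨z, hzy⟩ := hleft y fun hy =>
    hm.ne_top ((eq_top_iff_one m).2 (hyx ▸ m.mul_mem_right x hy))
  have hzx : z = x := by rw [← mul_one z, ← hyx, ← mul_assoc, hzy, one_mul]
  exact ⟨⟨x, y, hzx ▸ hzy, hyx⟩, rfl⟩

theorem unop_mem_of_smul_eq_zero {T : Type*} [AddCommGroup T] [Module Aᵐᵒᵖ T]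
    (hunit : ∀ x ∉ m, IsUnit x) {t : T} (ht : t ≠ 0) {r : Aᵐᵒᵖ} (h : r • t = 0) :
    r.unop ∈ m := by
  by_contra hr
  obtain ⟨u, hu⟩ := hunit _ hr
  apply ht
  calc t = op ((u : A) * ↑u⁻¹) • t := by simp
    _ = op (↑u⁻¹ : A) • r • t := by rw [op_mul, mul_smul, hu, op_unop]
    _ = 0 := by rw [h, smul_zero]

theorem le_leftAnn_of_isAtom [m.IsTwoSided] (hm : m ≠ ⊤) (hunit : ∀ x ∉ m, IsUnit x)
    {K : Submodule Aᵐᵒᵖ A} (hK : IsAtom K) : K ≤ m.leftAnn := by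
  intro x hx c hc
  by_contra hxc
  have hxcK : x * c ∈ K := K.smul_mem (op c) hx
  have hspan : Submodule.span Aᵐᵒᵖ {x * c} = K :=
    (hK.le_iff_eq (by rwa [ne_eq, Submodule.span_singleton_eq_bot])).1
      ((Submodule.span_singleton_le_iff_mem _ _).2 hxcK)
  obtain ⟨b, hb⟩ := Submodule.mem_span_singleton.1 (hspan ▸ hx : x ∈ Submodule.span Aᵐᵒᵖ {x * c})
  have hx0 : x ≠ 0 := by rintro rfl; exact hxc (zero_mul c)
  -- `x = x * (c * b)` with `1 - c * b` a unit forces `x = 0`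
  have hsub : op (1 - c * b.unop) • x = 0 := by
    rw [op_smul_eq_mul, mul_sub, mul_one, ← mul_assoc, ← smul_eq_mul_unop, hb, sub_self]
  have hcb : c * b.unop ∈ m := m.mul_mem_right _ hc
  exact hm ((eq_top_iff_one m).2 (by
    simpa using m.add_mem (unop_mem_of_smul_eq_zero hunit hx0 hsub) hcb))

theorem exists_mem_leftAnn_ne_zero_of_ne_bot [m.IsTwoSided] [IsArtinian Aᵐᵒᵖ A] (hm : m ≠ ⊤)
    (hunit : ∀ x ∉ m, IsUnit x) {K : Submodule Aᵐᵒᵖ A} (hK : K ≠ ⊥) :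
    ∃ z ∈ K, z ∈ m.leftAnn ∧ z ≠ 0 := by
  obtain ⟨K₀, hK₀, hle⟩ := (eq_bot_or_exists_atom_le K).resolve_left hK
  obtain ⟨z, hz, hz0⟩ := Submodule.exists_mem_ne_zero_of_ne_bot hK₀.1
  exact ⟨z, hle hz, le_leftAnn_of_isAtom hm hunit hK₀ hz, hz0⟩

end Local

section Reflexive

variable {m : Ideal A}

theorem exists_mem_rightAnn_leftAnn_subset_range_mul [IsNoetherian Aᵐᵒᵖ A] (hm : m ≠ ⊤)
    (hunit : ∀ x ∉ m, IsUnit x) (hrefl : Function.Bijective (dualEval A (A ⧸ m))) :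
    ∃ g ∈ m.rightAnn, (m.leftAnn : Set A) ⊆ Set.range (· * g) := by
  have : Nontrivial m.rightAnn :=
    Submodule.nontrivial_iff_ne_bot.2 (rightAnn_ne_bot_of_injective_dualEval hm hrefl.1)
  obtain ⟨W, hW, -⟩ := (eq_top_or_exists_le_coatom (⊥ : Submodule Aᵐᵒᵖ m.rightAnn)).resolve_left
    bot_ne_top
  have : IsSimpleModule Aᵐᵒᵖ (m.rightAnn ⧸ W) := isSimpleModule_iff_isCoatom.2 hW
  obtain ⟨g, hg⟩ : ∃ g, W.mkQ g ≠ 0 := by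
    by_contra! h
    exact hW.1 (eq_top_iff.2 fun g _ => (Submodule.Quotient.mk_eq_zero W).1 (h g))
  refine ⟨g, g.2, fun z hz => ?_⟩
  -- the annihilator of `W.mkQ g` lies in `m`, which kills `z` on the right
  obtain ⟨f, hf⟩ := exists_apply_eq_of_surjective_toSpanSingleton
    (IsSimpleModule.toSpanSingleton_surjective Aᵐᵒᵖ hg) (z := z) fun r hr => by
      rw [smul_eq_mul_unop]
      exact hz _ (unop_mem_of_smul_eq_zero hunit hg hr)
  obtain ⟨a, ha⟩ := exists_mul_eq_of_surjective_dualEval hrefl.2 (f ∘ₗ W.mkQ)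
  exact ⟨a, show a * g = z by rw [← ha, comp_apply, hf]⟩

variable (k : Type*) [Field k] [Algebra k A] [FiniteDimensional k A]

theorem finrank_range_mulLeft_add_finrank (hunit : ∀ x ∉ m, IsUnit x) {z : A}
    (hz : z ∈ m.leftAnn) (hz0 : z ≠ 0) :
    finrank k (range (mulLeft k z)) + finrank k (m.restrictScalars k) = finrank k A := by
  have hker : ker (mulLeft k z) = m.restrictScalars k := by
    ext a
    exact ⟨fun h => unop_mem_of_smul_eq_zero hunit hz0 (r := op a) h, fun h => hz a h⟩
  rw [← hker]
  exact finrank_range_add_finrank_ker _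

theorem finrank_range_mulRight_add_finrank_le {g : A} (hg : g ∈ m.rightAnn) :
    finrank k (range (mulRight k g)) + finrank k (m.restrictScalars k) ≤ finrank k A := by
  rw [← finrank_range_add_finrank_ker (mulRight k g)]
  have hle : m.restrictScalars k ≤ ker (mulRight k g) := fun a ha => hg a ha
  exact Nat.add_le_add_left (Submodule.finrank_mono hle) _

theorem leftAnn_restrictScalars_eq_range_mulLeft (hm : m ≠ ⊤) (hunit : ∀ x ∉ m, IsUnit x)
    (hrefl : Function.Bijective (dualEval A (A ⧸ m))) {z : A} (hz : z ∈ m.leftAnn)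
    (hz0 : z ≠ 0) : m.leftAnn.restrictScalars k = range (mulLeft k z) := by
  have : IsNoetherian Aᵐᵒᵖ A := isNoetherian_of_tower k inferInstance
  obtain ⟨g, hg, hgen⟩ := exists_mem_rightAnn_leftAnn_subset_range_mul hm hunit hrefl
  have hle : range (mulLeft k z) ≤ m.leftAnn.restrictScalars k := by
    rintro _ ⟨a, rfl⟩
    exact m.leftAnn.smul_mem (op a) hz
  have hle' : m.leftAnn.restrictScalars k ≤ range (mulRight k g) := hgen
  refine (Submodule.eq_of_le_of_finrank_le hle ?_).symm
  have := Submodule.finrank_mono hle'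
  have := finrank_range_mulLeft_add_finrank k hunit hz hz0
  have := finrank_range_mulRight_add_finrank_le k hg
  omega

end Reflexive

section Frobenius

variable {m : Ideal A} [m.IsTwoSided]

theorem leftAnn_le_of_ne_bot (k : Type*) [Field k] [Algebra k A] [FiniteDimensional k A]
    (hm : m ≠ ⊤) (hunit : ∀ x ∉ m, IsUnit x)
    (hrefl : Function.Bijective (dualEval A (A ⧸ m))) {K : Submodule Aᵐᵒᵖ A} (hK : K ≠ ⊥) :
    m.leftAnn ≤ K := by
  have : IsArtinian Aᵐᵒᵖ A := isArtinian_of_tower k inferInstance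
  obtain ⟨z, hzK, hz, hz0⟩ := exists_mem_leftAnn_ne_zero_of_ne_bot hm hunit hK
  intro w hw
  obtain ⟨a, rfl⟩ : w ∈ range (mulLeft k z) :=
    leftAnn_restrictScalars_eq_range_mulLeft k hm hunit hrefl hz hz0 ▸ hw
  exact K.smul_mem (op a) hzK

theorem exists_ne_zero_forall_exists_mul_eq (k : Type*) [Field k] [Algebra k A]
    [FiniteDimensional k A] (hm : m ≠ ⊤) (hunit : ∀ x ∉ m, IsUnit x)
    (hrefl : Function.Bijective (dualEval A (A ⧸ m))) :
    ∃ r : A, r ≠ 0 ∧ ∀ y : A, y ≠ 0 → ∃ b, y * b = r := by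
  have : Nontrivial A := ⟨⟨0, 1, fun h => hm ((eq_top_iff_one m).2 (h ▸ m.zero_mem))⟩⟩
  have : IsArtinian Aᵐᵒᵖ A := isArtinian_of_tower k inferInstance
  obtain ⟨r, -, hr, hr0⟩ := exists_mem_leftAnn_ne_zero_of_ne_bot hm hunit (K := ⊤) top_ne_bot
  refine ⟨r, hr0, fun y hy => ?_⟩
  have hspan : Submodule.span Aᵐᵒᵖ {y} ≠ ⊥ := by rwa [ne_eq, Submodule.span_singleton_eq_bot]
  obtain ⟨b, hb⟩ := Submodule.mem_span_singleton.1 (leftAnn_le_of_ne_bot k hm hunit hrefl hspan hr)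
  exact ⟨b.unop, hb⟩

end Frobenius

end Ideal

/-- Let `A` be a finite-dimensional local algebra over a field `k` (i.e. `A` has a unique
maximal left ideal). If the simple left `A`-module is reflexive, then `A` is
self-injective. -/
theorem selfinjective_of_local_of_simple_reflexive
    (k A : Type u) [Field k] [Ring A] [Algebra k A] [FiniteDimensional k A]
    (hlocal : ∃! I : Ideal A, I.IsMaximal)
    (hrefl : ∀ (S : Type u) [AddCommGroup S] [Module A S],
      IsSimpleModule A S → Function.Bijective (dualEval A S)) :
    Module.Injective A A := by
  obtain ⟨m, hm, hu⟩ := hlocal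
  have : m.IsTwoSided := Ideal.isTwoSided_of_forall_isMaximal_eq hm hu
  have hsimple : IsSimpleModule A (A ⧸ m) := isSimpleModule_iff_isCoatom.2 hm.out
  obtain ⟨r, hr0, hr⟩ := Ideal.exists_ne_zero_forall_exists_mul_eq k hm.ne_top
    (fun _ hx => Ideal.isUnit_of_notMem_of_forall_isMaximal_eq hm hu hx) (hrefl _ hsimple)
  obtain ⟨f, hf⟩ := Projective.exists_dual_ne_zero k hr0
  refine Module.injective_self_of_injective_mul_compr₂ f
    ((injective_iff_map_eq_zero _).2 fun y hy => by_contra fun hy0 => hf ?_)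
  obtain ⟨b, rfl⟩ := hr y hy0
  exact LinearMap.congr_fun hy b
end
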